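/- arXiv:1806.04644 — 7 statements merged into one kernel-verified Lean document; each statement's English description precedes it below -/
import Mathlib

section
/- For every integer ℓ ≥ 500, there exists an admissible cyclic {3,4,5}-partition 𝔞 of ℓ such that for all (a,b) ∈ {3,4,5}×{3,4,5}, the number of cyclic occurrences of the length-12 pattern (a,b,a,b,a,b,a,b,a,b,a,b) in 𝔞 is at least ℓ/200. -/
/-!
The witness is the cyclic word `3^p (43)^m (53)^m 4^q (54)^m 5^r 4 3` with `m = c + 6` and
`p, q, r ≥ c + 11`, where `c = ⌊ℓ/200⌋ + 1`, the lengths tuned so that its letters sum to `ℓ`.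
Each of the nine patterns `(ab)^6` then fits `c` times into a single constant or alternating
block. For admissibility: every letter is entered as often as it is left, so over a three-letter
alphabet it suffices that `3 4` and `4 3` occur equally often, and a shift by one position pairs
these occurrences off.
-/

namespace CyclicPartition

open Finset

def pairCount (t : ℕ) (a : ℕ → ℕ) (x y : ℕ) : ℕ :=
  #{i ∈ range t | a i = x ∧ a ((i + 1) % t) = y}

def alternatingCount (L t : ℕ) (a : ℕ → ℕ) (x y : ℕ) : ℕ :=
  #{i ∈ range t | #{j ∈ range L | a ((i + j) % t) = if j % 2 = 0 then x else y} = L}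

theorem card_filter_succ_mod (P : ℕ → Prop) [DecidablePred P] (t : ℕ) :
    #{i ∈ range t | P ((i + 1) % t)} = #{i ∈ range t | P i} := by
  cases t with
  | zero => rfl
  | succ n =>
    rw [card_filter, card_filter, sum_range_succ, sum_range_succ', Nat.mod_self]
    congr 1
    exact sum_congr rfl fun i hi => by rw [Nat.mod_eq_of_lt (Nat.succ_lt_succ (mem_range.1 hi))]

section Balance

variable {S : Finset ℕ} {t : ℕ} {a : ℕ → ℕ}

theorem sum_pairCount_left (ha : ∀ i < t, a i ∈ S) (x : ℕ) :
    ∑ y ∈ S, pairCount t a x y = #{i ∈ range t | a i = x} := by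
  rw [card_eq_sum_card_fiberwise (f := fun i => a ((i + 1) % t)) (t := S)]
  · simp only [filter_filter, pairCount]
  · intro i hi
    simp only [coe_filter, mem_range, Set.mem_ofPred_eq] at hi
    exact ha _ (Nat.mod_lt _ (by omega))

theorem sum_pairCount_right (ha : ∀ i < t, a i ∈ S) (x : ℕ) :
    ∑ y ∈ S, pairCount t a y x = #{i ∈ range t | a i = x} := by
  rw [← card_filter_succ_mod (a · = x), card_eq_sum_card_fiberwise (f := a) (t := S)]
  · simp only [filter_filter, pairCount, and_comm]
  · intro i hi
    simp only [coe_filter, mem_range, Set.mem_ofPred_eq] at hi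
    exact ha _ hi.1

/-- Each letter is entered as often as it is left, so over three letters the imbalances
`pairCount u v - pairCount v u` all agree up to sign and one of them vanishing suffices. -/
theorem pairCount_comm_of_three {x y z : ℕ} (hxy : x ≠ y) (hxz : x ≠ z) (hyz : y ≠ z)
    (ha : ∀ i < t, a i ∈ ({x, y, z} : Finset ℕ)) (h : pairCount t a x y = pairCount t a y x) :
    ∀ u ∈ ({x, y, z} : Finset ℕ), ∀ v ∈ ({x, y, z} : Finset ℕ),
      pairCount t a u v = pairCount t a v u := by
  have hbal u := (sum_pairCount_left ha u).trans (sum_pairCount_right ha u).symm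
  have hx := hbal x
  have hy := hbal y
  have hz := hbal z
  simp only [sum_insert, mem_insert, mem_singleton, hxy, hxz, hyz, not_false_eq_true,
    sum_singleton, or_self] at hx hy hz
  intro u hu v hv
  simp only [mem_insert, mem_singleton] at hu hv
  rcases hu with rfl | rfl | rfl <;> rcases hv with rfl | rfl | rfl <;> omega

end Balance

theorem le_alternatingCount {L t c s d : ℕ} {a : ℕ → ℕ} {x y : ℕ} (hL : 0 < L) (hd : 0 < d)
    (h : ∀ k < c, s + d * k + L ≤ t ∧
      ∀ j < L, a (s + d * k + j) = if j % 2 = 0 then x else y) :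
    c ≤ alternatingCount L t a x y := by
  rw [← card_range c]
  refine card_le_card_of_injOn (fun k => s + d * k) ?_ ?_
  · intro k hk
    simp only [coe_range, Set.mem_Iio] at hk
    obtain ⟨hlen, hval⟩ := h k hk
    simp only [coe_filter, mem_range, Set.mem_ofPred_eq]
    refine ⟨by omega, ?_⟩
    rw [filter_true_of_mem, card_range]
    intro j hj
    rw [mem_range] at hj
    rw [Nat.mod_eq_of_lt (by omega), hval j hj]
  · intro k _ k' _ hkk'
    simpa [hd.ne'] using hkk'

theorem sum_range_alternating {f : ℕ → ℕ} {x y : ℕ} (n : ℕ)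
    (hf : ∀ j ∈ range (2 * n), f j = if j % 2 = 0 then x else y) :
    ∑ j ∈ range (2 * n), f j = n * (x + y) := by
  simp only [mem_range] at hf
  induction n with
  | zero => simp
  | succ n ih =>
    rw [show 2 * (n + 1) = 2 * n + 1 + 1 by ring, sum_range_succ, sum_range_succ,
      ih fun j hj => hf j (by omega), hf (2 * n) (by omega), hf (2 * n + 1) (by omega)]
    rw [if_pos (by omega), if_neg (by omega)]
    ring

theorem exists_three_mul_add_four_mul {R : ℕ} (hR : 6 ≤ R) : ∃ e f, 3 * e + 4 * f = R :=
  ⟨3 * R % 4, (R - 3 * (3 * R % 4)) / 4, by omega⟩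

theorem add_one_mod_of_lt {i t : ℕ} (h : i < t) : (i + 1) % t = if i + 1 = t then 0 else i + 1 := by
  split_ifs with h'
  · rw [h', Nat.mod_self]
  · exact Nat.mod_eq_of_lt (by omega)

/-- The cyclic word `3^p (43)^m (53)^m 4^q (54)^m 5^r 4 3`, of length `p + q + r + 6m + 2`. -/
def word (p q r m i : ℕ) : ℕ :=
  if i < p then 3
  else if i < p + 2 * m then (if (i - p) % 2 = 0 then 4 else 3)
  else if i < p + 4 * m then (if (i - p) % 2 = 0 then 5 else 3)
  else if i < p + 4 * m + q then 4
  else if i < p + 6 * m + q then (if (i - p - q) % 2 = 0 then 5 else 4)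
  else if i < p + 6 * m + q + r then 5
  else if i = p + 6 * m + q + r then 4
  else 3

section Word

variable {p q r m : ℕ}

theorem word_mem (i : ℕ) : word p q r m i ∈ ({3, 4, 5} : Finset ℕ) := by
  unfold word
  split_ifs <;> simp

theorem word_eq_three_iff {i : ℕ} :
    word p q r m i = 3 ↔
      i < p ∨ (p ≤ i ∧ i < p + 4 * m ∧ (i - p) % 2 = 1) ∨ p + q + r + 6 * m < i := by
  unfold word
  split_ifs <;> omega

theorem word_eq_four_iff {i : ℕ} :
    word p q r m i = 4 ↔
      (p ≤ i ∧ i < p + 2 * m ∧ (i - p) % 2 = 0) ∨ (p + 4 * m ≤ i ∧ i < p + 4 * m + q) ∨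
        (p + 4 * m + q ≤ i ∧ i < p + 6 * m + q ∧ (i - p - q) % 2 = 1) ∨
        i = p + q + r + 6 * m := by
  unfold word
  split_ifs <;> omega

theorem word_eq_five_iff {i : ℕ} :
    word p q r m i = 5 ↔
      (p + 2 * m ≤ i ∧ i < p + 4 * m ∧ (i - p) % 2 = 0) ∨
        (p + 4 * m + q ≤ i ∧ i < p + 6 * m + q ∧ (i - p - q) % 2 = 0) ∨
        (p + 6 * m + q ≤ i ∧ i < p + 6 * m + q + r) := by
  unfold word
  split_ifs <;> omega

theorem pairCount_word_three_four (hp : 0 < p) (hq : 0 < q) :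
    pairCount (p + q + r + 6 * m + 2) (word p q r m) 3 4 =
      pairCount (p + q + r + 6 * m + 2) (word p q r m) 4 3 := by
  have h34 : pairCount (p + q + r + 6 * m + 2) (word p q r m) 3 4 =
      #{i ∈ range (p + q + r + 6 * m + 2) |
        i + 1 = p ∨ (p ≤ i ∧ i + 2 < p + 2 * m ∧ (i - p) % 2 = 1) ∨ i + 1 = p + 4 * m} := by
    refine congrArg card (filter_congr fun i hi => ?_)
    rw [mem_range] at hi
    rw [add_one_mod_of_lt hi]
    split_ifs <;> rw [word_eq_three_iff, word_eq_four_iff] <;> omega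
  have h43 : pairCount (p + q + r + 6 * m + 2) (word p q r m) 4 3 =
      #{i ∈ range (p + q + r + 6 * m + 2) |
        (p ≤ i ∧ i < p + 2 * m ∧ (i - p) % 2 = 0) ∨ i = p + q + r + 6 * m} := by
    refine congrArg card (filter_congr fun i hi => ?_)
    rw [mem_range] at hi
    rw [add_one_mod_of_lt hi]
    split_ifs <;> rw [word_eq_four_iff, word_eq_three_iff] <;> omega
  rw [h34, h43]
  -- shift by one, except that the `3 4` entering the `(53)^m` block is matched with the final `4 3`
  refine card_nbij' (fun i => if i + 1 = p + 4 * m then p + q + r + 6 * m else i + 1)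
    (fun j => if j = p + q + r + 6 * m then p + 4 * m - 1 else j - 1) ?_ ?_ ?_ ?_ <;>
  · intro i hi
    simp only [coe_filter, mem_range, Set.mem_ofPred_eq] at hi ⊢
    split_ifs <;> omega

theorem sum_word :
    ∑ i ∈ range (p + q + r + 6 * m + 2), word p q r m i = 3 * p + 4 * q + 5 * r + 24 * m + 7 := by
  rw [show p + q + r + 6 * m + 2 = p + 2 * m + 2 * m + q + 2 * m + r + 2 by ring]
  simp only [sum_range_add]
  rw [sum_const_nat (m := 3) fun i hi => ?_,
    sum_range_alternating (x := 4) (y := 3) m fun j hj => ?_,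
    sum_range_alternating (x := 5) (y := 3) m fun j hj => ?_,
    sum_const_nat (m := 4) fun i hi => ?_,
    sum_range_alternating (x := 5) (y := 4) m fun j hj => ?_,
    sum_const_nat (m := 5) fun i hi => ?_,
    sum_range_succ, sum_range_one, card_range, card_range, card_range,
    word_eq_four_iff.2 (by omega), word_eq_three_iff.2 (by omega)]
  · ring
  all_goals
    rw [mem_range] at *
    unfold word
    split_ifs <;> omega

theorem le_alternatingCount_word {c : ℕ} (hp : c + 11 ≤ p) (hq : c + 11 ≤ q) (hr : c + 11 ≤ r)
    (hm : c + 6 ≤ m) {x y : ℕ} (hx : x ∈ ({3, 4, 5} : Finset ℕ)) (hy : y ∈ ({3, 4, 5} : Finset ℕ)) :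
    c ≤ alternatingCount 12 (p + q + r + 6 * m + 2) (word p q r m) x y := by
  have window (s d : ℕ) (hd : 0 < d)
      (h : ∀ k < c, ∀ j < 12, s + d * k + 12 ≤ p + q + r + 6 * m + 2 ∧
        word p q r m (s + d * k + j) = if j % 2 = 0 then x else y) :
      c ≤ alternatingCount 12 (p + q + r + 6 * m + 2) (word p q r m) x y :=
    le_alternatingCount (by norm_num) hd fun k hk =>
      ⟨(h k hk 0 (by norm_num)).1, fun j hj => (h k hk j hj).2⟩
  -- the reversed pattern of an alternating block is read from its second letter on
  fin_cases hx <;> fin_cases hy <;>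
    [apply window 0 1 one_pos; apply window (p + 1) 2 two_pos;
     apply window (p + 2 * m + 1) 2 two_pos; apply window p 2 two_pos;
     apply window (p + 4 * m) 1 one_pos; apply window (p + 4 * m + q + 1) 2 two_pos;
     apply window (p + 2 * m) 2 two_pos; apply window (p + 4 * m + q) 2 two_pos;
     apply window (p + 6 * m + q) 1 one_pos] <;>
    · intro k hk j hj
      refine ⟨by omega, ?_⟩
      split_ifs <;> simp only [word_eq_three_iff, word_eq_four_iff, word_eq_five_iff] <;> omega

end Word

end CyclicPartition

open CyclicPartition in
/-- For every `ℓ ≥ 500` there is an admissible cyclic `{3,4,5}`-partition of `ℓ`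
in which every alternating pattern `(a,b)^6` of length 12 occurs cyclically
at least `ℓ/200` times. -/
theorem stmt_1 (ℓ : ℕ) (hℓ : 500 ≤ ℓ) :
    ∃ (t : ℕ) (a : ℕ → ℕ), 0 < t ∧
      (∀ i < t, a i ∈ ({3, 4, 5} : Finset ℕ)) ∧
      (∑ i ∈ Finset.range t, a i) = ℓ ∧
      (∀ x ∈ ({3, 4, 5} : Finset ℕ), ∀ y ∈ ({3, 4, 5} : Finset ℕ),
        ((Finset.range t).filter fun i => a i = x ∧ a ((i + 1) % t) = y).card =
        ((Finset.range t).filter fun i => a i = y ∧ a ((i + 1) % t) = x).card) ∧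
      (∀ x ∈ ({3, 4, 5} : Finset ℕ), ∀ y ∈ ({3, 4, 5} : Finset ℕ),
        (ℓ : ℝ) / 200 ≤
          (((Finset.range t).filter fun i =>
            ((Finset.range 12).filter fun j =>
              a ((i + j) % t) = if j % 2 = 0 then x else y).card = 12).card : ℝ)) := by
  set c := ℓ / 200 + 1
  obtain ⟨p, q, r, m, hp, hq, hr, hm, hsum⟩ : ∃ p q r m, c + 11 ≤ p ∧ c + 11 ≤ q ∧ c + 11 ≤ r ∧
      c + 6 ≤ m ∧ 3 * p + 4 * q + 5 * r + 24 * m + 7 = ℓ := by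
    -- `36 c + 283` is the value at `p = q = r = c + 11` and `m = c + 6`
    obtain ⟨e, f, hef⟩ := exists_three_mul_add_four_mul (R := ℓ - (36 * c + 283)) (by omega)
    exact ⟨c + 11 + e, c + 11 + f, c + 11, c + 6, by omega, by omega, le_rfl, le_rfl, by omega⟩
  refine ⟨p + q + r + 6 * m + 2, word p q r m, by omega, fun i _ => word_mem i,
    sum_word.trans hsum,
    pairCount_comm_of_three (by norm_num) (by norm_num) (by norm_num) (fun i _ => word_mem i)
      (pairCount_word_three_four (by omega) (by omega)), fun x hx y hy => ?_⟩
  have hcount := le_alternatingCount_word hp hq hr hm hx hy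
  rw [div_le_iff₀ (by norm_num)]
  exact_mod_cast (show ℓ ≤ _ * 200 by unfold alternatingCount at hcount; omega)
end

section
/- Let G be a regular graph on n vertices. Then there is a linear ordering of the edges of G such that any n/12 consecutive edges in the ordering form a matching. -/
/-!
Colour the edges greedily with `2r` colours: an edge meets at most `2r - 2` other edges. Among all
proper colourings with `2r` colours take one minimising the sum of the squared class sizes; it is
balanced. Otherwise let `A` be a largest and `B` a smallest class, `#A ≥ #B + 2`. Some connected
component of `A ∪ B` has more `A`-edges than `B`-edges, and it has exactly one more, because the
matching `A` covers `2a` of its vertices and a connected graph on `N` vertices has at least `N - 1`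
edges. Swapping the two colours on that component (a Kempe swap) lowers the sum of squares.

By the handshake lemma each class of a balanced colouring has at least `n/4 - 1 ≥ 3(k - 1)` edges,
where `k = ⌊n/12⌋`. Concatenate the classes. Each class starts with `k - 1` edges that avoid the at
most `2(k - 1)` vertices of the last `k - 1` edges of the previous class. Such edges exist because
each of those vertices lies on at most one edge of the class. Now a window of `k` consecutive edges
lies either in one class, which is a matching, or across the junction of two classes.
-/

open Finset SimpleGraph

lemma SimpleGraph.ConnectedComponent.card_supp_le_card_add_one {V : Type*} [Finite V]
    {H : SimpleGraph V} (c : H.ConnectedComponent) {F : Finset (Sym2 V)}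
    (hF : ∀ u v, H.Adj u v → u ∈ c.supp → s(u, v) ∈ F) : Nat.card c.supp ≤ #F + 1 := by
  refine c.connected_toSimpleGraph.card_vert_le_card_edgeSet_add_one.trans
    (Nat.add_le_add_right ?_ 1)
  rw [← Nat.card_eq_finsetCard]
  refine Nat.card_le_card_of_injective (fun e => ⟨Sym2.map Subtype.val e.1, ?_⟩) ?_
  · obtain ⟨e, he⟩ := e
    induction e using Sym2.ind with | h u v => exact hF u v he u.2
  · intro e f h
    exact Subtype.ext (Sym2.map.injective Subtype.val_injective (congrArg Subtype.val h))

lemma SimpleGraph.connectedComponentMk_fromEdgeSet_eq {V : Type*} {s : Set (Sym2 V)}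
    {e : Sym2 V} (he : e ∈ s) {v : V} (hv : v ∈ e) :
    (fromEdgeSet s).connectedComponentMk v = (fromEdgeSet s).connectedComponentMk e.out.1 := by
  by_cases h : e.out.1 = v
  · rw [h]
  · refine (ConnectedComponent.connectedComponentMk_eq_of_adj ?_).symm
    rw [fromEdgeSet_adj, ← (Sym2.mem_and_mem_iff h).1 ⟨Sym2.out_fst_mem e, hv⟩]
    exact ⟨he, h⟩

section

variable {V : Type*} [DecidableEq V]

lemma card_biUnion_toFinset_eq_two_mul {M : Finset (Sym2 V)}
    (hM : (M : Set (Sym2 V)).PairwiseDisjoint Sym2.toFinset) (hd : ∀ e ∈ M, ¬ e.IsDiag) :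
    #(M.biUnion Sym2.toFinset) = 2 * #M := by
  rw [card_biUnion hM, sum_congr rfl fun e he => Sym2.card_toFinset_of_not_isDiag e (hd e he),
    sum_const, smul_eq_mul, mul_comm]

lemma two_mul_card_le_natCard [Finite V] {M : Finset (Sym2 V)}
    (hM : (M : Set (Sym2 V)).PairwiseDisjoint Sym2.toFinset) (hMd : ∀ e ∈ M, ¬ e.IsDiag)
    {U : Set V} (hMU : ∀ e ∈ M, ∀ v ∈ e, v ∈ U) : 2 * #M ≤ Nat.card U := by
  rw [← card_biUnion_toFinset_eq_two_mul hM hMd, ← Set.ncard_coe_finset, ← Nat.card_coe_set_eq]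
  refine Set.ncard_le_ncard (fun v hv => ?_) (Set.toFinite _)
  obtain ⟨e, he, hve⟩ := mem_biUnion.1 hv
  exact hMU e he v (Sym2.mem_toFinset.1 hve)

theorem exists_kempe_chain [Finite V] {A B : Finset (Sym2 V)}
    (hA : (A : Set (Sym2 V)).PairwiseDisjoint Sym2.toFinset) (hAd : ∀ e ∈ A, ¬ e.IsDiag)
    (hlt : #B < #A) :
    ∃ S ⊆ A ∪ B, (∀ e ∈ A ∪ B, ∀ f ∈ S, ¬ Disjoint e.toFinset f.toFinset → e ∈ S) ∧
      #(B ∩ S) + 1 = #(A ∩ S) := by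
  classical
  set H := fromEdgeSet (↑(A ∪ B) : Set (Sym2 V))
  set comp : Sym2 V → H.ConnectedComponent := fun e => H.connectedComponentMk e.out.1
  have comp_eq : ∀ e ∈ A ∪ B, ∀ v ∈ e, H.connectedComponentMk v = comp e :=
    fun e he v hv => connectedComponentMk_fromEdgeSet_eq (mem_coe.2 he) hv
  obtain ⟨c, -, hc⟩ :
      ∃ c ∈ (A ∪ B).image comp, #{e ∈ B | comp e = c} < #{e ∈ A | comp e = c} := by
    refine exists_lt_of_sum_lt ?_
    rwa [card_eq_sum_card_fiberwise (t := (A ∪ B).image comp) (f := comp)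
      (fun e he => mem_image_of_mem comp (mem_union_left B he)),
      card_eq_sum_card_fiberwise (t := (A ∪ B).image comp) (f := comp)
      (fun e he => mem_image_of_mem comp (mem_union_right A he))] at hlt
  set S := {e ∈ A ∪ B | comp e = c} with hS
  have hS_A : A ∩ S = {e ∈ A | comp e = c} := by ext e; simp +contextual [S]
  have hS_B : B ∩ S = {e ∈ B | comp e = c} := by ext e; simp +contextual [S]
  refine ⟨S, filter_subset _ _, fun e he f hf hef => ?_, ?_⟩
  · obtain ⟨v, hve, hvf⟩ := not_disjoint_iff.1 hef
    rw [Sym2.mem_toFinset] at hve hvf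
    rw [mem_filter] at hf ⊢
    exact ⟨he, (comp_eq e he v hve).symm.trans ((comp_eq f hf.1 v hvf).trans hf.2)⟩
  have hvert : 2 * #{e ∈ A | comp e = c} ≤ Nat.card c.supp :=
    two_mul_card_le_natCard (hA.subset fun e he => (mem_filter.1 he).1)
      (fun e he => hAd e (mem_filter.1 he).1) fun e he v hv =>
        (c.mem_supp_iff v).2 ((comp_eq e (mem_union_left B (mem_filter.1 he).1) v hv).trans
          (mem_filter.1 he).2)
  have hedge : Nat.card c.supp ≤ #S + 1 := by
    refine c.card_supp_le_card_add_one fun u v huv hu => mem_filter.2 ⟨huv.1, ?_⟩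
    rw [← comp_eq _ huv.1 u (Sym2.mem_mk_left u v)]
    exact (c.mem_supp_iff u).1 hu
  have hunion : #S ≤ #{e ∈ A | comp e = c} + #{e ∈ B | comp e = c} := by
    rw [hS, filter_union]; exact card_union_le _ _
  rw [hS_A, hS_B]
  omega

section Coloring

variable {ι : Type*} {E : Finset (Sym2 V)} {χ : Sym2 V → ι}

def IsProperEdgeColoring (E : Finset (Sym2 V)) (χ : Sym2 V → ι) : Prop :=
  (E : Set (Sym2 V)).Pairwise fun e f => χ e = χ f → Disjoint e.toFinset f.toFinset

lemma IsProperEdgeColoring.pairwiseDisjoint [DecidableEq ι] (hχ : IsProperEdgeColoring E χ)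
    (i : ι) : (↑{e ∈ E | χ e = i} : Set (Sym2 V)).PairwiseDisjoint Sym2.toFinset :=
  fun _ he _ hf hef => hχ (mem_filter.1 he).1 (mem_filter.1 hf).1 hef
    ((mem_filter.1 he).2.trans (mem_filter.1 hf).2.symm)

theorem exists_isProperEdgeColoring [Fintype ι] [Nonempty ι] (E : Finset (Sym2 V))
    (hE : ∀ e ∈ E, #{f ∈ E | f ≠ e ∧ ¬Disjoint e.toFinset f.toFinset} < Fintype.card ι) :
    ∃ χ : Sym2 V → ι, IsProperEdgeColoring E χ := by
  classical
  refine Finset.induction_on' (motive := fun s => ∃ χ : Sym2 V → ι, IsProperEdgeColoring s χ) E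
    ⟨fun _ => Classical.arbitrary ι, by simp [IsProperEdgeColoring]⟩ ?_
  rintro e s heE hsE hes ⟨χ, hχ⟩
  set blocked := ({f ∈ s | ¬Disjoint e.toFinset f.toFinset}).image χ
  have hblocked : #blocked < #(univ : Finset ι) := by
    refine (card_image_le.trans (card_le_card fun f hf => ?_)).trans_lt (hE e heE)
    obtain ⟨hfs, hef⟩ := mem_filter.1 hf
    exact mem_filter.2 ⟨hsE hfs, fun h : f = e => hes (h ▸ hfs), hef⟩
  obtain ⟨i, -, hi⟩ := exists_mem_notMem_of_card_lt_card hblocked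
  refine ⟨Function.update χ e i, ?_⟩
  have hupd : ∀ f ∈ s, Function.update χ e i f = χ f :=
    fun f hf => Function.update_of_ne (fun h : f = e => hes (h ▸ hf)) _ _
  rw [IsProperEdgeColoring, coe_insert, Set.pairwise_insert]
  refine ⟨fun f hf g hg hfg => ?_, fun f hf _ => ?_⟩
  · dsimp only
    rw [hupd f hf, hupd g hg]
    exact hχ hf hg hfg
  rw [Function.update_self, hupd f hf]
  have hdisj : χ f = i → Disjoint e.toFinset f.toFinset := fun h => by
    by_contra hef
    exact hi (mem_image.2 ⟨f, mem_filter.2 ⟨hf, hef⟩, h⟩)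
  exact ⟨fun h => hdisj h.symm, fun h => (hdisj h).symm⟩

lemma card_filter_ite_swap_add [DecidableEq ι] {S : Finset (Sym2 V)} (hSE : S ⊆ E) (i j t : ι) :
    #{e ∈ E | (if e ∈ S then Equiv.swap i j (χ e) else χ e) = t} + #{e ∈ S | χ e = t} =
      #{e ∈ E | χ e = t} + #{e ∈ S | χ e = Equiv.swap i j t} := by
  have hsplit : ∀ p : Sym2 V → Prop, [DecidablePred p] →
      #{e ∈ E | p e} = #{e ∈ E \ S | p e} + #{e ∈ S | p e} := fun p _ => by
    rw [← card_union_of_disjoint (disjoint_filter_filter sdiff_disjoint), ← filter_union,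
      sdiff_union_of_subset hSE]
  have houtside : {e ∈ E \ S | (if e ∈ S then Equiv.swap i j (χ e) else χ e) = t} =
      {e ∈ E \ S | χ e = t} := filter_congr fun e he => by rw [if_neg (mem_sdiff.1 he).2]
  have hinside : {e ∈ S | (if e ∈ S then Equiv.swap i j (χ e) else χ e) = t} =
      {e ∈ S | χ e = Equiv.swap i j t} :=
    filter_congr fun e he => by rw [if_pos he, Equiv.swap_apply_eq_iff]
  rw [hsplit, hsplit fun e => χ e = t, houtside, hinside]
  ring

lemma IsProperEdgeColoring.ite_swap [DecidableEq ι] (hχ : IsProperEdgeColoring E χ) {i j : ι}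
    {S : Finset (Sym2 V)} (hS : S ⊆ {e ∈ E | χ e = i} ∪ {e ∈ E | χ e = j})
    (hclosed : ∀ e ∈ {e ∈ E | χ e = i} ∪ {e ∈ E | χ e = j}, ∀ f ∈ S,
      ¬Disjoint e.toFinset f.toFinset → e ∈ S) :
    IsProperEdgeColoring E fun e => if e ∈ S then Equiv.swap i j (χ e) else χ e := by
  have hS_col : ∀ e ∈ S, χ e = i ∨ χ e = j := fun e he => by
    rcases mem_union.1 (hS he) with h | h
    exacts [Or.inl (mem_filter.1 h).2, Or.inr (mem_filter.1 h).2]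
  have hmixed : ∀ e ∈ S, ∀ f ∈ E, f ∉ S → Equiv.swap i j (χ e) = χ f →
      Disjoint e.toFinset f.toFinset := by
    intro e he f hf hfS hef
    by_contra hmeet
    refine hfS (hclosed f ?_ e he fun h => hmeet h.symm)
    rcases hS_col e he with h | h <;> rw [h] at hef
    · exact mem_union_right _ (mem_filter.2 ⟨hf, by simpa using hef.symm⟩)
    · exact mem_union_left _ (mem_filter.2 ⟨hf, by simpa using hef.symm⟩)
  intro e he f hf hef hcol
  dsimp only at hcol
  split_ifs at hcol with heS hfS hfS
  · exact hχ he hf hef ((Equiv.swap i j).injective hcol)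
  · exact hmixed e heS f hf hfS hcol
  · exact (hmixed f hfS e he heS hcol.symm).symm
  · exact hχ he hf hef hcol

theorem IsProperEdgeColoring.exists_kempe_swap [Finite V] [DecidableEq ι]
    (hχ : IsProperEdgeColoring E χ) (hE : ∀ e ∈ E, ¬e.IsDiag) {i j : ι}
    (hlt : #{e ∈ E | χ e = j} < #{e ∈ E | χ e = i}) :
    ∃ χ' : Sym2 V → ι, IsProperEdgeColoring E χ' ∧
      #{e ∈ E | χ' e = i} + 1 = #{e ∈ E | χ e = i} ∧
      #{e ∈ E | χ' e = j} = #{e ∈ E | χ e = j} + 1 ∧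
      ∀ t, t ≠ i → t ≠ j → #{e ∈ E | χ' e = t} = #{e ∈ E | χ e = t} := by
  obtain ⟨S, hS, hclosed, hcard⟩ := exists_kempe_chain (hχ.pairwiseDisjoint i)
    (fun e he => hE e (mem_filter.1 he).1) hlt
  have hSE : S ⊆ E := hS.trans (union_subset (filter_subset _ _) (filter_subset _ _))
  have hinter : ∀ t, {e ∈ E | χ e = t} ∩ S = {e ∈ S | χ e = t} := fun t => by
    rw [filter_inter, inter_eq_right.2 hSE]
  rw [inter_comm, hinter, inter_comm, hinter] at hcard
  refine ⟨_, hχ.ite_swap hS hclosed, ?_, ?_, fun t hti htj => ?_⟩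
  · have := card_filter_ite_swap_add hSE i j i (χ := χ)
    simp only [Equiv.swap_apply_left] at this ⊢
    omega
  · have := card_filter_ite_swap_add hSE i j j (χ := χ)
    simp only [Equiv.swap_apply_right] at this ⊢
    omega
  · have := card_filter_ite_swap_add hSE i j t (χ := χ)
    simp only [Equiv.swap_apply_of_ne_of_ne hti htj] at this ⊢
    omega

lemma sum_sq_lt_of_transfer [Fintype ι] [DecidableEq ι] {f g : ι → ℕ} {i j : ι}
    (hi : g i + 1 = f i) (hj : g j = f j + 1) (hlt : f j + 1 < f i)
    (hrest : ∀ t, t ≠ i → t ≠ j → g t = f t) :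
    ∑ t, g t ^ 2 < ∑ t, f t ^ 2 := by
  have hij : i ≠ j := by rintro rfl; omega
  have hcompl : ∑ t ∈ {i, j}ᶜ, g t ^ 2 = ∑ t ∈ {i, j}ᶜ, f t ^ 2 := sum_congr rfl fun t ht => by
    rw [mem_compl, mem_insert, mem_singleton, not_or] at ht
    rw [hrest t ht.1 ht.2]
  rw [← sum_add_sum_compl {i, j} (g · ^ 2), ← sum_add_sum_compl {i, j} (f · ^ 2), sum_pair hij,
    sum_pair hij, hcompl]
  nlinarith

theorem IsProperEdgeColoring.exists_balanced [Finite V] [Fintype ι] [DecidableEq ι]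
    (hχ : IsProperEdgeColoring E χ) (hE : ∀ e ∈ E, ¬e.IsDiag) :
    ∃ χ' : Sym2 V → ι, IsProperEdgeColoring E χ' ∧
      ∀ i j, #{e ∈ E | χ' e = i} ≤ #{e ∈ E | χ' e = j} + 1 := by
  obtain ⟨χ', hχ', hmin⟩ := (measure fun χ : Sym2 V → ι => ∑ i, #{e ∈ E | χ e = i} ^ 2).wf.has_min
    {χ | IsProperEdgeColoring E χ} ⟨χ, hχ⟩
  refine ⟨χ', hχ', fun i j => not_lt.1 fun hij => ?_⟩
  obtain ⟨χ'', hχ'', hi, hj, hrest⟩ := hχ'.exists_kempe_swap hE (i := i) (j := j) (by omega)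
  exact hmin χ'' hχ'' (sum_sq_lt_of_transfer hi hj hij hrest)

end Coloring

end

section Windows

variable {α : Type*} {R : α → α → Prop} {k : ℕ}

def PairwiseWithin (R : α → α → Prop) (k : ℕ) (l : List α) : Prop :=
  ∀ i j : Fin l.length, (i : ℕ) < j → (j : ℕ) < i + k → R (l.get i) (l.get j)

lemma List.Pairwise.pairwiseWithin {l : List α} (h : l.Pairwise R) : PairwiseWithin R k l :=
  fun i j hij _ => List.pairwise_iff_get.1 h i j hij

lemma PairwiseWithin.append {xs ys : List α} (hx : PairwiseWithin R k xs)
    (hy : PairwiseWithin R k ys)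
    (hxy : ∀ a ∈ xs.drop (xs.length - (k - 1)), ∀ b ∈ ys.take (k - 1), R a b) :
    PairwiseWithin R k (xs ++ ys) := by
  rintro ⟨i, hi⟩ ⟨j, hj⟩ hij hjk
  simp only [List.length_append] at hi hj hij hjk
  simp only [List.get_eq_getElem]
  rcases lt_or_ge j xs.length with hjx | hjx
  · rw [List.getElem_append_left (hij.trans hjx), List.getElem_append_left hjx]
    exact hx ⟨i, hij.trans hjx⟩ ⟨j, hjx⟩ hij hjk
  rcases lt_or_ge i xs.length with hix | hix
  · rw [List.getElem_append_left hix, List.getElem_append_right hjx]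
    refine hxy _ (List.mem_iff_getElem.2 ⟨i - (xs.length - (k - 1)), by simp; omega, ?_⟩) _
      (List.mem_iff_getElem.2 ⟨j - xs.length, by simp; omega, List.getElem_take⟩)
    rw [List.getElem_drop]
    congr 1
    omega
  · rw [List.getElem_append_right hix, List.getElem_append_right hjx]
    exact hy ⟨i - xs.length, by omega⟩ ⟨j - xs.length, by omega⟩ (by simp; omega)
      (by simp; omega)

end Windows

section

variable {V : Type*} [DecidableEq V]

lemma card_filter_not_disjoint_le {C : Finset (Sym2 V)}
    (hC : (C : Set (Sym2 V)).PairwiseDisjoint Sym2.toFinset) (W : Finset V) :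
    #{e ∈ C | ¬Disjoint e.toFinset W} ≤ #W :=
  card_le_card_of_forall_subsingleton (fun e v => v ∈ e.toFinset)
    (fun _ he => not_disjoint_iff.1 (mem_filter.1 he).2 |>.imp fun _ h => h.symm)
    fun v _ _ he _ hf => hC.elim (mem_filter.1 he.1).1 (mem_filter.1 hf.1).1
      (not_disjoint_iff.2 ⟨v, he.2, hf.2⟩)

lemma card_biUnion_toFinset_le_two_mul (l : List (Sym2 V)) :
    #(l.toFinset.biUnion Sym2.toFinset) ≤ 2 * l.length := by
  calc _ ≤ ∑ e ∈ l.toFinset, #e.toFinset := card_biUnion_le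
    _ ≤ ∑ _e ∈ l.toFinset, 2 := sum_le_sum fun e _ => by
      rw [Sym2.card_toFinset]; split_ifs <;> omega
    _ ≤ 2 * l.length := by
      rw [sum_const, smul_eq_mul, mul_comm]
      exact Nat.mul_le_mul_left 2 (List.toFinset_card_le l)

lemma exists_list_take_disjoint {C : Finset (Sym2 V)}
    (hC : (C : Set (Sym2 V)).PairwiseDisjoint Sym2.toFinset) (W : Finset V) {m : ℕ}
    (hm : m + #W ≤ #C) :
    ∃ l : List (Sym2 V), l.Nodup ∧ l.toFinset = C ∧ ∀ e ∈ l.take m, Disjoint e.toFinset W := by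
  have hS : m ≤ #{e ∈ C | Disjoint e.toFinset W} := by
    have := card_filter_add_card_filter_not (s := C) (Disjoint ·.toFinset W)
    have := card_filter_not_disjoint_le hC W
    omega
  refine ⟨{e ∈ C | Disjoint e.toFinset W}.toList ++ {e ∈ C | ¬Disjoint e.toFinset W}.toList,
    ?_, ?_, ?_⟩
  · refine List.nodup_append.2 ⟨nodup_toList _, nodup_toList _, fun a ha b hb hab => ?_⟩
    rw [mem_toList, mem_filter] at ha hb
    exact hb.2 (hab ▸ ha.2)
  · ext e
    simp only [List.mem_toFinset, List.mem_append, mem_toList, mem_filter]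
    tauto
  · rw [List.take_append_of_le_length (by simpa using hS)]
    exact fun e he => (mem_filter.1 (mem_toList.1 (List.mem_of_mem_take he))).2

variable {ι : Type*} {E : Finset (Sym2 V)} {χ : Sym2 V → ι}

theorem IsProperEdgeColoring.exists_pairwiseWithin [DecidableEq ι] (hχ : IsProperEdgeColoring E χ)
    {k : ℕ} (hk : ∀ i, 3 * (k - 1) ≤ #{e ∈ E | χ e = i}) (cs : List ι) (hcs : cs.Nodup)
    (W : Finset V) (hW : #W ≤ 2 * (k - 1)) :
    ∃ l : List (Sym2 V), l.Nodup ∧ (∀ e, e ∈ l ↔ e ∈ E ∧ χ e ∈ cs) ∧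
      PairwiseWithin (fun e f => Disjoint e.toFinset f.toFinset) k l ∧
      ∀ e ∈ l.take (k - 1), Disjoint e.toFinset W := by
  induction cs generalizing W with
  | nil => exact ⟨[], List.nodup_nil, by simp, fun i => i.elim0, by simp⟩
  | cons c cs ih =>
    obtain ⟨hc, hcs⟩ := List.nodup_cons.1 hcs
    obtain ⟨lc, hlc_nodup, hlc, hlc_take⟩ :=
      exists_list_take_disjoint (hχ.pairwiseDisjoint c) W (m := k - 1) (by have := hk c; omega)
    have hmem_lc : ∀ e, e ∈ lc ↔ e ∈ E ∧ χ e = c := fun e => by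
      rw [← List.mem_toFinset, hlc, mem_filter]
    have hlc_len : lc.length = #{e ∈ E | χ e = c} := by
      rw [← List.toFinset_card_of_nodup hlc_nodup, hlc]
    set tail := lc.drop (lc.length - (k - 1))
    obtain ⟨l, hl_nodup, hl, hl_win, hl_take⟩ := ih hcs (tail.toFinset.biUnion Sym2.toFinset)
      ((card_biUnion_toFinset_le_two_mul tail).trans (by simp only [tail, List.length_drop]; omega))
    refine ⟨lc ++ l, ?_, fun e => ?_, ?_, ?_⟩
    · refine List.nodup_append.2 ⟨hlc_nodup, hl_nodup, fun a ha b hb hab => ?_⟩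
      exact hc (((hmem_lc a).1 ha).2 ▸ hab ▸ ((hl b).1 hb).2)
    · rw [List.mem_append, hmem_lc, hl, List.mem_cons]
      tauto
    · refine PairwiseWithin.append (List.Pairwise.pairwiseWithin ?_) hl_win fun a ha b hb => ?_
      · exact hlc_nodup.pairwise_of_set_pairwise
          ((hχ.pairwiseDisjoint c).subset fun e he => by rw [← hlc]; exact List.mem_toFinset.2 he)
      · exact (hl_take b hb).symm.mono_left (subset_biUnion_of_mem _ (List.mem_toFinset.2 ha))
    · rw [List.take_append_of_le_length (by have := hk c; omega)]
      exact hlc_take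

lemma SimpleGraph.IsRegularOfDegree.card_meeting_lt [Fintype V] {G : SimpleGraph V}
    [DecidableRel G.Adj] {r : ℕ} (hG : G.IsRegularOfDegree r) {e : Sym2 V}
    (he : e ∈ G.edgeFinset) :
    #{f ∈ G.edgeFinset | f ≠ e ∧ ¬Disjoint e.toFinset f.toFinset} < 2 * r := by
  induction e using Sym2.ind with | h x y => ?_
  have hinc : ∀ v ∈ s(x, y), s(x, y) ∈ G.incidenceFinset v := fun v hv =>
    (G.mem_incidenceFinset _ _).2 ⟨mem_edgeFinset.1 he, hv⟩
  have hsub : {f ∈ G.edgeFinset | f ≠ s(x, y) ∧ ¬Disjoint s(x, y).toFinset f.toFinset} ⊆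
      (G.incidenceFinset x).erase s(x, y) ∪ (G.incidenceFinset y).erase s(x, y) := by
    intro f hf
    obtain ⟨hfG, hne, hmeet⟩ := mem_filter.1 hf
    obtain ⟨v, hv, hvf⟩ := not_disjoint_iff.1 hmeet
    have hf_inc : f ∈ G.incidenceFinset v :=
      (G.mem_incidenceFinset _ _).2 ⟨mem_edgeFinset.1 hfG, Sym2.mem_toFinset.1 hvf⟩
    rcases Sym2.mem_iff.1 (Sym2.mem_toFinset.1 hv) with rfl | rfl
    · exact mem_union_left _ (mem_erase.2 ⟨hne, hf_inc⟩)
    · exact mem_union_right _ (mem_erase.2 ⟨hne, hf_inc⟩)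
  have hx := card_erase_of_mem (hinc x (Sym2.mem_mk_left x y))
  have hy := card_erase_of_mem (hinc y (Sym2.mem_mk_right x y))
  have hpos : 0 < #(G.incidenceFinset x) := card_pos.2 ⟨_, hinc x (Sym2.mem_mk_left x y)⟩
  rw [card_incidenceFinset_eq_degree, hG.degree_eq] at hx hy hpos
  have := (card_le_card hsub).trans (card_union_le _ _)
  omega

end

lemma card_le_mul_of_balanced {V ι : Type*} [Fintype ι] [DecidableEq ι] {E : Finset (Sym2 V)}
    {χ : Sym2 V → ι} (hbal : ∀ i j, #{e ∈ E | χ e = i} ≤ #{e ∈ E | χ e = j} + 1)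
    (j : ι) : #E ≤ Fintype.card ι * (#{e ∈ E | χ e = j} + 1) := by
  rw [card_eq_sum_card_fiberwise (t := univ) (f := χ) fun _ _ => mem_univ _]
  calc _ ≤ ∑ _i : ι, (#{e ∈ E | χ e = j} + 1) := sum_le_sum fun i _ => hbal i j
    _ = _ := by rw [sum_const, card_univ, smul_eq_mul]

lemma SimpleGraph.IsRegularOfDegree.card_le_four_mul {V : Type*} [Fintype V] {G : SimpleGraph V}
    [DecidableRel G.Adj] {r : ℕ} (hG : G.IsRegularOfDegree r) (hr : 0 < r)
    {χ : Sym2 V → Fin (2 * r)}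
    (hbal : ∀ i j, #{e ∈ G.edgeFinset | χ e = i} ≤ #{e ∈ G.edgeFinset | χ e = j} + 1)
    (i : Fin (2 * r)) : Fintype.card V ≤ 4 * (#{e ∈ G.edgeFinset | χ e = i} + 1) := by
  have hE := card_le_mul_of_balanced hbal i
  rw [Fintype.card_fin] at hE
  have hdeg : Fintype.card V * r = 2 * #G.edgeFinset := by
    rw [← sum_degrees_eq_twice_card_edges, sum_congr rfl fun v _ => hG.degree_eq v, sum_const,
      card_univ, smul_eq_mul]
  refine Nat.le_of_mul_le_mul_right ?_ hr
  calc Fintype.card V * r = 2 * #G.edgeFinset := hdeg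
    _ ≤ 2 * (2 * r * (#{e ∈ G.edgeFinset | χ e = i} + 1)) := Nat.mul_le_mul_left 2 hE
    _ = 4 * (#{e ∈ G.edgeFinset | χ e = i} + 1) * r := by ring

/-- Every regular graph `G` on `n` vertices admits an ordering of its edges such that
any `n/12` consecutive edges form a matching. -/
theorem stmt_3 {V : Type*} [Fintype V] [DecidableEq V] (G : SimpleGraph V)
    [DecidableRel G.Adj] (r : ℕ) (hreg : G.IsRegularOfDegree r) :
    ∃ l : List (Sym2 V), l.Nodup ∧ (∀ e, e ∈ l ↔ e ∈ G.edgeSet) ∧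
      ∀ i j : Fin l.length, (i : ℕ) < j → (j : ℕ) < i + Fintype.card V / 12 →
        ∀ v, v ∈ l.get i → v ∉ l.get j := by
  obtain rfl | hr := Nat.eq_zero_or_pos r
  · refine ⟨[], List.nodup_nil, fun e => ⟨by simp, fun he => ?_⟩, fun i => i.elim0⟩
    exact absurd (hreg.card_meeting_lt (mem_edgeFinset.2 he)) (Nat.not_lt_zero _)
  have : Nonempty (Fin (2 * r)) := ⟨⟨0, by omega⟩⟩
  obtain ⟨χ₀, hχ₀⟩ := exists_isProperEdgeColoring (ι := Fin (2 * r)) G.edgeFinset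
    fun e he => by simpa using hreg.card_meeting_lt he
  obtain ⟨χ, hχ, hbal⟩ := hχ₀.exists_balanced fun e he =>
    G.not_isDiag_of_mem_edgeSet (mem_edgeFinset.1 he)
  have hk : ∀ i, 3 * (Fintype.card V / 12 - 1) ≤ #{e ∈ G.edgeFinset | χ e = i} := fun i => by
    have := hreg.card_le_four_mul hr hbal i
    omega
  obtain ⟨l, hnd, hmem, hwin, -⟩ := hχ.exists_pairwiseWithin hk (List.finRange _)
    (List.nodup_finRange _) ∅ (by simp)
  refine ⟨l, hnd, fun e => by simp [hmem], fun i j hij hjk v hv hv' => ?_⟩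
  exact disjoint_left.1 (hwin i j hij hjk) (Sym2.mem_toFinset.2 hv) (Sym2.mem_toFinset.2 hv')
end

section
/- Let G be an r-regular graph on n vertices. Then the edges of G can be partitioned into matchings M_1, ..., M_{r+1} (some possibly empty) with |M_1| ≤ |M_2| ≤ ... ≤ |M_{r+1}|, and in any such partition into r+1 matchings ordered by size, the second smallest matching M_2 has size at least n/4. -/
open Finset SimpleGraph
set_option linter.unusedSectionVars false

section Vizing

variable {V : Type*} [Fintype V] [DecidableEq V] {r : ℕ}

def IsPEC (G : SimpleGraph V) (r : ℕ) (C : Sym2 V → Option (Fin (r+1))) : Prop :=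
  (∀ e c, C e = some c → e ∈ G.edgeSet) ∧
  (∀ u v w c, v ≠ w → C s(u,v) = some c → C s(u,w) ≠ some c)

def Miss (C : Sym2 V → Option (Fin (r+1))) (x : V) (c : Fin (r+1)) : Prop :=
  ∀ y, C s(x,y) ≠ some c

def abGraph (C : Sym2 V → Option (Fin (r+1))) (a b : Fin (r+1)) : SimpleGraph V where
  Adj u v := u ≠ v ∧ (C s(u,v) = some a ∨ C s(u,v) = some b)
  symm := by
    constructor
    intro u v ⟨h1, h2⟩
    refine ⟨h1.symm, ?_⟩
    rwa [Sym2.eq_swap] at h2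
  loopless := ⟨fun v h => h.1 rfl⟩

def swFun (a b : Fin (r+1)) : Option (Fin (r+1)) → Option (Fin (r+1)) := fun o =>
  if o = some a then some b else if o = some b then some a else o

lemma swFun_a (a b : Fin (r+1)) : swFun a b (some a) = some b := by simp [swFun]

lemma swFun_b (a b : Fin (r+1)) (hab : a ≠ b) : swFun a b (some b) = some a := by
  simp [swFun, (Option.some_injective _).ne_iff.2 hab.symm]

lemma swFun_ab {a b : Fin (r+1)} {o} (h : o = some a ∨ o = some b) (hab : a ≠ b) :
    swFun a b o = some a ∨ swFun a b o = some b := by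
  rcases h with h | h <;> subst h
  · exact Or.inr (swFun_a a b)
  · exact Or.inl (swFun_b a b hab)

lemma swFun_inj (a b : Fin (r+1)) : Function.Injective (swFun a b) := by
  intro o o' h
  unfold swFun at h
  split_ifs at h <;> simp_all

lemma swFun_eq_a {a b : Fin (r+1)} {o} (hab : a ≠ b) (h : swFun a b o = some a) :
    o = some b := by
  unfold swFun at h
  split_ifs at h <;> simp_all

lemma swFun_eq_none {a b : Fin (r+1)} {o} : swFun a b o = none ↔ o = none := by
  unfold swFun
  split_ifs <;> simp_all

open scoped Classical in
noncomputable def kswap (C : Sym2 V → Option (Fin (r+1))) (a b : Fin (r+1)) (x₀ : V) :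
    Sym2 V → Option (Fin (r+1)) := fun e =>
  if (C e = some a ∨ C e = some b) ∧ ∃ u ∈ e, (abGraph C a b).Reachable x₀ u
  then swFun a b (C e) else C e

variable {G : SimpleGraph V} {C : Sym2 V → Option (Fin (r+1))} {a b : Fin (r+1)}

lemma abGraph_maxdeg2 (hC : IsPEC G r C) (v z₁ z₂ z₃ : V)
    (h1 : (abGraph C a b).Adj v z₁) (h2 : (abGraph C a b).Adj v z₂)
    (h3 : (abGraph C a b).Adj v z₃) : z₁ = z₂ ∨ z₁ = z₃ ∨ z₂ = z₃ := by
  by_contra h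
  push_neg at h
  obtain ⟨h12, h13, h23⟩ := h
  have key : ∀ z w : V, z ≠ w → C s(v,z) = C s(v,w) →
      (C s(v,z) = some a ∨ C s(v,z) = some b) → False := by
    rintro z w hzw hne (hz | hz)
    · exact hC.2 v z w a hzw hz (by rw [← hne, hz])
    · exact hC.2 v z w b hzw hz (by rw [← hne, hz])
  rcases h1.2 with c1 | c1 <;> rcases h2.2 with c2 | c2 <;> rcases h3.2 with c3 | c3
  · exact key z₁ z₂ h12 (c1.trans c2.symm) (Or.inl c1)
  · exact key z₁ z₂ h12 (c1.trans c2.symm) (Or.inl c1)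
  · exact key z₁ z₃ h13 (c1.trans c3.symm) (Or.inl c1)
  · exact key z₂ z₃ h23 (c2.trans c3.symm) (Or.inr c2)
  · exact key z₂ z₃ h23 (c2.trans c3.symm) (Or.inl c2)
  · exact key z₁ z₃ h13 (c1.trans c3.symm) (Or.inr c1)
  · exact key z₁ z₂ h12 (c1.trans c2.symm) (Or.inr c1)
  · exact key z₁ z₂ h12 (c1.trans c2.symm) (Or.inr c1)

lemma abGraph_deg1 (hC : IsPEC G r C) (v : V)
    (hm : Miss C v a ∨ Miss C v b) (z w : V)
    (h1 : (abGraph C a b).Adj v z) (h2 : (abGraph C a b).Adj v w) : z = w := by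
  by_contra hzw
  rcases hm with hm | hm
  · have c1 : C s(v,z) = some b := (h1.2).resolve_left (hm z)
    have c2 : C s(v,w) = some b := (h2.2).resolve_left (hm w)
    exact hC.2 v z w b hzw c1 c2
  · have c1 : C s(v,z) = some a := (h1.2).resolve_right (hm z)
    have c2 : C s(v,w) = some a := (h2.2).resolve_right (hm w)
    exact hC.2 v z w a hzw c1 c2

lemma kempe (hC : IsPEC G r C) (hab : a ≠ b) (x₀ : V) :
    IsPEC G r (kswap C a b x₀) ∧
      (∀ e, kswap C a b x₀ e = none ↔ C e = none) ∧
      (∀ y, ¬ (abGraph C a b).Reachable x₀ y → ∀ z, kswap C a b x₀ s(y,z) = C s(y,z)) ∧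
      (∀ e, C e ≠ some a → C e ≠ some b → kswap C a b x₀ e = C e) ∧
      (∀ e c', c' ≠ a → c' ≠ b → (kswap C a b x₀ e = some c' ↔ C e = some c')) ∧
      (∀ y, (abGraph C a b).Reachable x₀ y → Miss C y b → Miss (kswap C a b x₀) y a) := by
  classical
  set H := abGraph C a b with hH
  set C₂ := kswap C a b x₀ with hC₂
  have C₂_def : ∀ e, C₂ e = if (C e = some a ∨ C e = some b) ∧ ∃ u ∈ e, H.Reachable x₀ u
      then swFun a b (C e) else C e := by
    intro e
    rw [hC₂, kswap]
  have both_reach : ∀ u v : V, (C s(u,v) = some a ∨ C s(u,v) = some b) →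
      (H.Reachable x₀ u ↔ H.Reachable x₀ v) := by
    intro u v hcol
    have hedge : s(u,v) ∈ G.edgeSet := by
      rcases hcol with h | h
      · exact hC.1 _ _ h
      · exact hC.1 _ _ h
    have hne : u ≠ v := (G.mem_edgeSet.1 hedge).ne
    have hadj : H.Adj u v := ⟨hne, hcol⟩
    exact ⟨fun h => h.trans hadj.reachable, fun h => h.trans hadj.symm.reachable⟩
  have Sw_pair : ∀ u v : V,
      ((C s(u,v) = some a ∨ C s(u,v) = some b) ∧ ∃ w ∈ s(u,v), H.Reachable x₀ w) ↔
      ((C s(u,v) = some a ∨ C s(u,v) = some b) ∧ H.Reachable x₀ u) := by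
    intro u v
    constructor
    · rintro ⟨hcol, w, hw, hrw⟩
      refine ⟨hcol, ?_⟩
      rcases Sym2.mem_iff.1 hw with rfl | rfl
      · exact hrw
      · exact (both_reach u w hcol).2 hrw
    · rintro ⟨hcol, hr⟩
      exact ⟨hcol, u, Sym2.mem_mk_left u v, hr⟩
  -- key evaluation lemmas
  have eval_swapped : ∀ u v : V, (C s(u,v) = some a ∨ C s(u,v) = some b) →
      H.Reachable x₀ u → C₂ s(u,v) = swFun a b (C s(u,v)) := by
    intro u v hcol hr
    rw [C₂_def, if_pos ((Sw_pair u v).2 ⟨hcol, hr⟩)]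
  have eval_unswapped : ∀ u v : V,
      (¬ (C s(u,v) = some a ∨ C s(u,v) = some b) ∨ ¬ H.Reachable x₀ u) →
      C₂ s(u,v) = C s(u,v) := by
    intro u v h
    rw [C₂_def, if_neg]
    intro hsw
    rcases h with h | h
    · exact h hsw.1
    · exact h ((Sw_pair u v).1 hsw).2
  have unreach : ∀ y, ¬ H.Reachable x₀ y → ∀ z, C₂ s(y,z) = C s(y,z) := by
    intro y hy z
    exact eval_unswapped y z (Or.inr hy)
  refine ⟨⟨?_, ?_⟩, ?_, unreach, ?_, ?_, ?_⟩
  · -- domain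
    intro e c h
    rw [C₂_def] at h
    split at h
    · rename_i hs
      rcases hs.1 with h' | h'
      · exact hC.1 e _ h'
      · exact hC.1 e _ h'
    · exact hC.1 e c h
  · -- properness
    intro u v w c hvw h1 h2
    by_cases hr : H.Reachable x₀ u
    · by_cases k1 : C s(u,v) = some a ∨ C s(u,v) = some b <;>
        by_cases k2 : C s(u,w) = some a ∨ C s(u,w) = some b
      · rw [eval_swapped u v k1 hr] at h1
        rw [eval_swapped u w k2 hr] at h2
        have := swFun_inj a b (h1.trans h2.symm)
        rcases k1 with hc | hc
        · exact hC.2 u v w a hvw hc (this ▸ hc)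
        · exact hC.2 u v w b hvw hc (this ▸ hc)
      · rw [eval_swapped u v k1 hr] at h1
        rw [eval_unswapped u w (Or.inl k2)] at h2
        rcases swFun_ab k1 hab with h | h
        · rw [h1] at h
          exact k2 (Or.inl (h2.trans h))
        · rw [h1] at h
          exact k2 (Or.inr (h2.trans h))
      · rw [eval_unswapped u v (Or.inl k1)] at h1
        rw [eval_swapped u w k2 hr] at h2
        rcases swFun_ab k2 hab with h | h
        · rw [h2] at h
          exact k1 (Or.inl (h1.trans h))
        · rw [h2] at h
          exact k1 (Or.inr (h1.trans h))
      · rw [eval_unswapped u v (Or.inl k1)] at h1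
        rw [eval_unswapped u w (Or.inl k2)] at h2
        exact hC.2 u v w c hvw h1 h2
    · rw [unreach u hr v] at h1
      rw [unreach u hr w] at h2
      exact hC.2 u v w c hvw h1 h2
  · -- support preserved
    intro e
    rw [C₂_def]
    split
    · rename_i hs
      rw [swFun_eq_none]
    · rfl
  · -- non-ab edges unchanged
    intro e ha hb
    rw [C₂_def, if_neg]
    rintro ⟨h | h, -⟩
    · exact ha h
    · exact hb h
  · -- color classes of other colors unchanged
    intro e c' h1 h2
    rw [C₂_def]
    split
    · rename_i hs
      constructor
      · intro h
        rcases swFun_ab hs.1 hab with hh | hh <;> rw [h] at hh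
        · exact absurd (Option.some_injective _ hh) h1
        · exact absurd (Option.some_injective _ hh) h2
      · intro h
        rcases hs.1 with hh | hh <;> rw [h] at hh
        · exact absurd (Option.some_injective _ hh) h1
        · exact absurd (Option.some_injective _ hh) h2
    · exact Iff.rfl
  · -- reachable vertex missing b now misses a
    intro y hy hmb z hz
    by_cases k : C s(y,z) = some a ∨ C s(y,z) = some b
    · rw [eval_swapped y z k hy] at hz
      exact hmb z (swFun_eq_a hab hz)
    · rw [eval_unswapped y z (Or.inl k)] at hz
      exact k (Or.inl hz)


end Vizing

section Paths
variable {V : Type*}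


lemma interior_two_nbrs {H : SimpleGraph V} :
    ∀ {s t : V} (W : H.Walk s t), W.IsPath → ∀ u ∈ W.support, u ≠ s → u ≠ t →
    ∃ w₁ w₂, w₁ ≠ w₂ ∧ H.Adj u w₁ ∧ H.Adj u w₂ ∧ w₁ ∈ W.support ∧ w₂ ∈ W.support := by
  intro s t W
  induction W with
  | nil =>
    intro _ u hu hus _
    simp [Walk.support_nil] at hu
    exact absurd hu hus
  | @cons s' b t' hadj rest ih =>
    intro hp u hu hus hut
    rw [Walk.support_cons] at hu
    rcases List.mem_cons.1 hu with rfl | hu'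
    · exact absurd rfl hus
    by_cases hub : u = b
    · subst hub
      -- rest is nonempty since u ≠ t'
      cases rest with
      | nil => exact absurd rfl hut
      | @cons _ b₂ _ h2 rest2 =>
        have hs'not : s' ∉ (Walk.cons h2 rest2).support :=
          (Walk.cons_isPath_iff _ _ |>.1 hp).2
        refine ⟨s', b₂, ?_, hadj.symm, h2, ?_, ?_⟩
        · intro hsb
          rw [hsb] at hs'not
          exact hs'not (by simp [Walk.support_cons])
        · simp [Walk.support_cons]
        · simp [Walk.support_cons]
    · obtain ⟨w₁, w₂, hne, a1, a2, m1, m2⟩ :=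
        ih hp.of_cons u hu' hub hut
      exact ⟨w₁, w₂, hne, a1, a2, by simp [Walk.support_cons, m1],
        by simp [Walk.support_cons, m2]⟩

lemma endpoint_nbr {H : SimpleGraph V} {s t : V} (W : H.Walk s t) (hst : s ≠ t) :
    ∃ w, H.Adj s w ∧ w ∈ W.support := by
  cases W with
  | nil => exact absurd rfl hst
  | cons h rest =>
    exact ⟨_, h, by simp [Walk.support_cons, Walk.start_mem_support]⟩

lemma three_endpoints {H : SimpleGraph V}
    (hmax : ∀ v z₁ z₂ z₃, H.Adj v z₁ → H.Adj v z₂ → H.Adj v z₃ → z₁ = z₂ ∨ z₁ = z₃ ∨ z₂ = z₃)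
    {p q x : V}
    (hdp : ∀ z w, H.Adj p z → H.Adj p w → z = w)
    (hdq : ∀ z w, H.Adj q z → H.Adj q w → z = w)
    (hdx : ∀ z w, H.Adj x z → H.Adj x w → z = w)
    (hpq : p ≠ q) (hpx : p ≠ x) (hqx : q ≠ x)
    (h1 : H.Reachable p q) (h2 : H.Reachable p x) : False := by
  classical
  obtain ⟨W0⟩ := h1
  let P : H.Path p q := W0.toPath
  obtain ⟨W, hW⟩ := P
  -- closure of the support of W under adjacency
  have closure : ∀ u ∈ W.support, ∀ z, H.Adj u z → z ∈ W.support := by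
    intro u hu z hz
    by_cases hup : u = p
    · subst hup
      obtain ⟨w, haw, hmw⟩ := endpoint_nbr W hpq
      rwa [hdp z w hz haw]
    by_cases huq : u = q
    · subst huq
      obtain ⟨w, haw, hmw⟩ := endpoint_nbr W.reverse hpq.symm
      rw [Walk.support_reverse, List.mem_reverse] at hmw
      rwa [hdq z w hz haw]
    obtain ⟨w₁, w₂, hne, a1, a2, m1, m2⟩ := interior_two_nbrs W hW u hu hup huq
    rcases hmax u z w₁ w₂ hz a1 a2 with h | h | h
    · rwa [h]
    · rwa [h]
    · exact absurd h hne
  -- everything reachable from p is in the support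
  have reach_in : ∀ {s t : V}, s ∈ W.support → H.Walk s t → t ∈ W.support := by
    intro s t hs D
    induction D with
    | nil => exact hs
    | cons h rest ih => exact ih (closure _ hs _ h)
  obtain ⟨D⟩ := h2
  have hx : x ∈ W.support := reach_in (Walk.start_mem_support W) D
  obtain ⟨w₁, w₂, hne, a1, a2, -, -⟩ :=
    interior_two_nbrs W hW x hx (Ne.symm hpx) (Ne.symm hqx)
  exact hne (hdx w₁ w₂ a1 a2)

end Paths

section Vizing2
variable {V : Type*} [Fintype V] [DecidableEq V] {r : ℕ}
variable {G : SimpleGraph V} {C : Sym2 V → Option (Fin (r+1))}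

lemma exists_miss [DecidableRel G.Adj] (hC : IsPEC G r C) (x : V) (hdeg : G.degree x ≤ r) :
    ∃ c, Miss C x c := by
  classical
  by_contra h
  push_neg at h
  simp only [Miss, not_forall, not_not] at h
  choose f hf using h
  have hinj : Function.Injective f := by
    intro c c' hcc
    by_contra hne
    have h1 := hf c
    have h2 := hf c'
    rw [hcc] at h1
    rw [h1] at h2
    exact hne (Option.some_injective _ h2)
  have hmem : ∀ c, f c ∈ G.neighborFinset x := by
    intro c
    rw [mem_neighborFinset]
    exact (G.mem_edgeSet).1 (hC.1 _ _ (hf c))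
  have : Fintype.card (Fin (r+1)) ≤ G.degree x := by
    rw [← card_neighborFinset_eq_degree, ← Fintype.card_coe]
    exact Fintype.card_le_of_injective
      (fun c => (⟨f c, hmem c⟩ : {y // y ∈ G.neighborFinset x}))
      (fun a b hab => hinj (by simpa using hab))
  simp at this
  omega


lemma rotate (hC : IsPEC G r C) (x : V) (k : ℕ) (y : ℕ → V)
    (hinj : ∀ i ≤ k, ∀ j ≤ k, y i = y j → i = j)
    (hadj : ∀ i ≤ k, G.Adj x (y i))
    (h0 : C s(x, y 0) = none)
    (hchain : ∀ i < k, ∃ c, C s(x, y (i+1)) = some c ∧ Miss C (y i) c)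
    (γ : Fin (r+1)) (hγx : Miss C x γ) (hγk : Miss C (y k) γ) :
    ∃ C', IsPEC G r C' ∧ (∀ e, C e ≠ none → C' e ≠ none) ∧ C' s(x, y 0) ≠ none := by
  classical
  have hxy : ∀ i ≤ k, x ≠ y i := fun i hi => (hadj i hi).ne
  set P : Sym2 V → Prop := fun e => ∃ i, i ≤ k ∧ e = s(x, y i) with hP
  set C' : Sym2 V → Option (Fin (r+1)) := fun e =>
    if h : P e then (if Classical.choose h = k then some γ
      else C s(x, y (Classical.choose h + 1))) else C e with hC'
  -- uniqueness of the fan index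
  have uniq : ∀ (e : Sym2 V) (h : P e) (i : ℕ), i ≤ k → e = s(x, y i) →
      Classical.choose h = i := by
    intro e h i hi hei
    obtain ⟨hle, heq⟩ := Classical.choose_spec h
    have : s(x, y (Classical.choose h)) = s(x, y i) := by rw [← heq, ← hei]
    exact hinj _ hle _ hi (Sym2.congr_right.1 this)
  have evalFan : ∀ i ≤ k, C' s(x, y i) =
      if i = k then some γ else C s(x, y (i+1)) := by
    intro i hi
    have hPi : P s(x, y i) := ⟨i, hi, rfl⟩
    rw [hC']
    simp only [dif_pos hPi]
    rw [uniq _ hPi i hi rfl]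
  have evalOther : ∀ e, ¬ P e → C' e = C e := by
    intro e he
    rw [hC']
    simp only [dif_neg he]
  -- characterize P on pairs with x
  have Pxv : ∀ v : V, P s(x, v) ↔ ∃ i ≤ k, v = y i := by
    intro v
    constructor
    · rintro ⟨i, hi, hei⟩
      rcases Sym2.eq_iff.1 hei with ⟨-, h2⟩ | ⟨h1, -⟩
      · exact ⟨i, hi, h2⟩
      · exact absurd h1 (hxy i hi)
    · rintro ⟨i, hi, rfl⟩
      exact ⟨i, hi, rfl⟩
  have Pgen : ∀ u v : V, u ≠ x → v ≠ x → ¬ P s(u,v) := by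
    rintro u v hu hv ⟨i, hi, hei⟩
    rcases Sym2.eq_iff.1 hei with ⟨h1, -⟩ | ⟨-, h2⟩
    · exact hu h1
    · exact hv h2
  -- new colors are `some`
  have fanSome : ∀ i ≤ k, ∃ c, C' s(x, y i) = some c ∧ Miss C (y i) c := by
    intro i hi
    rw [evalFan i hi]
    by_cases hik : i = k
    · subst hik
      simp only [if_pos rfl]
      exact ⟨γ, rfl, hγk⟩
    · simp only [if_neg hik]
      have hik' : i < k := lt_of_le_of_ne hi hik
      obtain ⟨c, hc, hm⟩ := hchain i hik'
      exact ⟨c, hc, hm⟩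
  -- injectivity at x
  have hAfan : ∀ (v w : V) (c : Fin (r+1)), (∃ i ≤ k, v = y i) → ¬ (∃ i ≤ k, w = y i) →
      v ≠ w → C' s(x,v) = some c → C' s(x,w) = some c → False := by
    rintro v w c ⟨i, hi, rfl⟩ hw hvw h1 h2
    have h2' : C s(x,w) = some c := by
      rw [← evalOther _ (fun hp => hw ((Pxv w).1 hp))]
      exact h2
    rw [evalFan i hi] at h1
    by_cases hik : i = k
    · rw [if_pos hik] at h1
      have : c = γ := (Option.some_injective _ h1).symm
      exact hγx w (by rw [← this]; exact h2')
    · rw [if_neg hik] at h1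
      have hik' : i < k := lt_of_le_of_ne hi hik
      have hne : y (i+1) ≠ w := by
        intro h
        exact hw ⟨i+1, hik', h.symm⟩
      exact hC.2 x (y (i+1)) w c hne h1 h2'
  have inj_at_x : ∀ (v w : V) (c : Fin (r+1)), v ≠ w →
      C' s(x,v) = some c → C' s(x,w) = some c → False := by
    intro v w c hvw h1 h2
    by_cases k1 : ∃ i ≤ k, v = y i <;> by_cases k2 : ∃ i ≤ k, w = y i
    · -- both fan
      obtain ⟨i, hi, rfl⟩ := k1
      obtain ⟨j, hj, rfl⟩ := k2
      have hij : i ≠ j := fun h => hvw (by rw [h])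
      rw [evalFan i hi] at h1
      rw [evalFan j hj] at h2
      by_cases hik : i = k <;> by_cases hjk : j = k
      · exact hij (hik.trans hjk.symm)
      · rw [if_pos hik] at h1
        rw [if_neg hjk] at h2
        have : c = γ := (Option.some_injective _ h1).symm
        exact hγx (y (j+1)) (by rw [← this]; exact h2)
      · rw [if_neg hik] at h1
        rw [if_pos hjk] at h2
        have : c = γ := (Option.some_injective _ h2).symm
        exact hγx (y (i+1)) (by rw [← this]; exact h1)
      · rw [if_neg hik] at h1
        rw [if_neg hjk] at h2
        have hik' : i < k := lt_of_le_of_ne hi hik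
        have hjk' : j < k := lt_of_le_of_ne hj hjk
        have hne : y (i+1) ≠ y (j+1) := by
          intro h
          exact hij (Nat.succ_injective (hinj _ hik' _ hjk' h))
        exact hC.2 x (y (i+1)) (y (j+1)) c hne h1 h2
    · exact hAfan v w c k1 k2 hvw h1 h2
    · exact hAfan w v c k2 k1 hvw.symm h2 h1
    · -- neither fan
      rw [evalOther _ (fun hp => k1 ((Pxv v).1 hp))] at h1
      rw [evalOther _ (fun hp => k2 ((Pxv w).1 hp))] at h2
      exact hC.2 x v w c hvw h1 h2
  refine ⟨C', ⟨?_, ?_⟩, ?_, ?_⟩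
  · -- domain
    intro e c h
    by_cases hp : P e
    · obtain ⟨i, hi, rfl⟩ := hp
      exact (G.mem_edgeSet).2 (hadj i hi)
    · rw [evalOther e hp] at h
      exact hC.1 e c h
  · -- properness
    intro u v w c hvw h1 h2
    by_cases hux : u = x
    · subst hux
      exact inj_at_x v w c hvw h1 h2
    · -- u ≠ x
      by_cases hvx : v = x
      · rw [hvx] at h1
        have hxw : x ≠ w := fun h => hvw (hvx.trans h)
        have hwx : w ≠ x := fun h => hxw h.symm
        have h2' : C s(u,w) = some c := by
          rw [← evalOther _ (Pgen u w hux hwx)]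
          exact h2
        -- s(u,x) : is u a fan vertex?
        by_cases hufan : ∃ i ≤ k, u = y i
        · obtain ⟨i, hi, rfl⟩ := hufan
          have hswap : s(y i, x) = s(x, y i) := Sym2.eq_swap
          rw [hswap] at h1
          obtain ⟨c', hc', hm⟩ := fanSome i hi
          rw [hc'] at h1
          have : c' = c := Option.some_injective _ h1
          exact hm w (by rw [this]; exact h2')
        · have : ¬ P s(u, x) := by
            intro hp
            rw [Sym2.eq_swap] at hp
            exact hufan ((Pxv u).1 hp)
          rw [evalOther _ this] at h1
          exact hC.2 u x w c hxw h1 h2'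
      · by_cases hwx : w = x
        · rw [hwx] at h2
          have hvx' : v ≠ x := fun h => hvw (h.trans hwx.symm)
          have h1' : C s(u,v) = some c := by
            rw [← evalOther _ (Pgen u v hux hvx)]
            exact h1
          by_cases hufan : ∃ i ≤ k, u = y i
          · obtain ⟨i, hi, rfl⟩ := hufan
            have hswap : s(y i, x) = s(x, y i) := Sym2.eq_swap
            rw [hswap] at h2
            obtain ⟨c', hc', hm⟩ := fanSome i hi
            rw [hc'] at h2
            have : c' = c := Option.some_injective _ h2
            exact hm v (by rw [this]; exact h1')
          · have : ¬ P s(u, x) := by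
              intro hp
              rw [Sym2.eq_swap] at hp
              exact hufan ((Pxv u).1 hp)
            rw [evalOther _ this] at h2
            exact hC.2 u v x c hvx' h1' h2
        · -- neither v nor w is x: unchanged
          rw [evalOther _ (Pgen u v hux hvx)] at h1
          rw [evalOther _ (Pgen u w hux hwx)] at h2
          exact hC.2 u v w c hvw h1 h2
  · -- support grows
    intro e he
    by_cases hp : P e
    · obtain ⟨i, hi, rfl⟩ := hp
      obtain ⟨c, hc, -⟩ := fanSome i hi
      rw [hc]
      exact Option.some_ne_none c
    · rw [evalOther e hp]
      exact he
  · -- new edge colored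
    obtain ⟨c, hc, -⟩ := fanSome 0 (Nat.zero_le k)
    rw [hc]
    exact Option.some_ne_none c



lemma extend [DecidableRel G.Adj] (hC : IsPEC G r C) (hdeg : ∀ v, G.degree v ≤ r)
    (x y₀ : V) (hadjxy : G.Adj x y₀) (hnone : C s(x,y₀) = none) :
    ∃ C', IsPEC G r C' ∧ (∀ e, C e ≠ none → C' e ≠ none) ∧ C' s(x,y₀) ≠ none := by
  classical
  -- fans
  set Fan : ℕ → (ℕ → V) → Prop := fun k y =>
    (∀ i ≤ k, ∀ j ≤ k, y i = y j → i = j) ∧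
    (∀ i ≤ k, G.Adj x (y i)) ∧ y 0 = y₀ ∧
    (∀ i < k, ∃ c, C s(x, y (i+1)) = some c ∧ Miss C (y i) c) with hFan
  have fan0 : Fan 0 (fun _ => y₀) := by
    refine ⟨fun i hi j hj _ => by omega, fun i _ => hadjxy, rfl, fun i hi => by omega⟩
  have fan_bound : ∀ k y, Fan k y → k + 1 ≤ Fintype.card V := by
    intro k y hk
    have : (Finset.range (k+1)).card ≤ (univ : Finset V).card := by
      apply Finset.card_le_card_of_injOn y
      · intro i _
        exact mem_univ _
      · intro i hi j hj hij
        exact hk.1 i (by simpa using Nat.lt_succ_iff.1 (Finset.mem_range.1 hi))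
          j (by simpa using Nat.lt_succ_iff.1 (Finset.mem_range.1 hj)) hij
    simpa using this
  set P : ℕ → Prop := fun k => ∃ y, Fan k y with hPdef
  have hP0 : P 0 := ⟨_, fan0⟩
  set k := Nat.findGreatest P (Fintype.card V) with hkdef
  have hPk : P k := Nat.findGreatest_spec (Nat.zero_le _) hP0
  have hmaxfan : ¬ P (k+1) := by
    intro hp
    obtain ⟨y, hy⟩ := hp
    have hb := fan_bound _ _ hy
    exact Nat.findGreatest_is_greatest (Nat.lt_succ_self k) (by omega) ⟨y, hy⟩
  obtain ⟨y, hinj, hadj, hy0, hchain⟩ := hPk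
  have h0 : C s(x, y 0) = none := by rw [hy0]; exact hnone
  obtain ⟨β, hβ⟩ := exists_miss hC (y k) (hdeg _)
  obtain ⟨α, hα⟩ := exists_miss hC x (hdeg _)
  by_cases hβx : Miss C x β
  · -- easy case: rotate the whole fan with β
    obtain ⟨C', h1, h2, h3⟩ := rotate hC x k y hinj hadj h0 hchain β hβx hβ
    rw [hy0] at h3
    exact ⟨C', h1, h2, h3⟩
  · -- β appears at x
    have hw : ∃ w, C s(x,w) = some β := by
      simp only [Miss, not_forall, not_not] at hβx
      exact hβx
    obtain ⟨w, hw⟩ := hw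
    -- w is a fan vertex
    have hwfan : ∃ j ≤ k, w = y j := by
      by_contra hnf
      push_neg at hnf
      apply hmaxfan
      refine ⟨fun i => if i = k+1 then w else y i, ?_, ?_, ?_, ?_⟩
      · intro i hi j hj hij
        simp only [] at hij
        by_cases hi1 : i = k+1 <;> by_cases hj1 : j = k+1
        · omega
        · rw [if_pos hi1, if_neg hj1] at hij
          exact absurd hij (hnf j (by omega))
        · rw [if_neg hi1, if_pos hj1] at hij
          exact absurd hij.symm (hnf i (by omega))
        · rw [if_neg hi1, if_neg hj1] at hij
          exact hinj i (by omega) j (by omega) hij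
      · intro i hi
        show G.Adj x (if i = k+1 then w else y i)
        by_cases hi1 : i = k+1
        · rw [if_pos hi1]
          exact (G.mem_edgeSet).1 (hC.1 _ _ hw)
        · rw [if_neg hi1]
          exact hadj i (by omega)
      · show (if (0:ℕ) = k+1 then w else y 0) = y₀
        rw [if_neg (by omega : ¬ (0 : ℕ) = k+1)]
        exact hy0
      · intro i hi
        show ∃ c, C s(x, if i+1 = k+1 then w else y (i+1)) = some c ∧
          Miss C (if i = k+1 then w else y i) c
        by_cases hi1 : i = k
        · rw [if_pos (by omega : i+1 = k+1), if_neg (by omega : ¬ i = k+1), hi1]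
          exact ⟨β, hw, hβ⟩
        · have hik : i < k := by omega
          rw [if_neg (by omega : ¬ i+1 = k+1), if_neg (by omega : ¬ i = k+1)]
          exact hchain i hik
    obtain ⟨j, hj, rfl⟩ := hwfan
    have hjpos : 1 ≤ j := by
      rcases Nat.eq_zero_or_pos j with rfl | h
      · rw [h0] at hw
        exact absurd hw (by simp)
      · exact h
    have hj1k : j - 1 < k := by omega
    have hmissβ : Miss C (y (j-1)) β := by
      obtain ⟨c, hc, hm⟩ := hchain (j-1) hj1k
      have hj1 : j - 1 + 1 = j := by omega
      rw [hj1] at hc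
      have : c = β := Option.some_injective _ (hc.symm.trans hw)
      rwa [this] at hm
    have hab : α ≠ β := by
      intro h
      rw [h] at hα
      exact hα (y j) hw
    set H := abGraph C α β with hH
    have hmax := fun v z₁ z₂ z₃ h1 h2 h3 => abGraph_maxdeg2 (a := α) (b := β) hC v z₁ z₂ z₃ h1 h2 h3
    have dX : ∀ z w, H.Adj x z → H.Adj x w → z = w :=
      fun z w h1 h2 => abGraph_deg1 hC x (Or.inl hα) z w h1 h2
    have dJ : ∀ z w, H.Adj (y (j-1)) z → H.Adj (y (j-1)) w → z = w :=
      fun z w h1 h2 => abGraph_deg1 hC (y (j-1)) (Or.inr hmissβ) z w h1 h2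
    have dK : ∀ z w, H.Adj (y k) z → H.Adj (y k) w → z = w :=
      fun z w h1 h2 => abGraph_deg1 hC (y k) (Or.inr hβ) z w h1 h2
    by_cases hr1 : H.Reachable (y (j-1)) x
    · by_cases hr2 : H.Reachable (y k) x
      · -- both reachable: contradiction
        exfalso
        have hxj : x ≠ y (j-1) := (hadj _ (by omega)).ne
        have hxk : x ≠ y k := (hadj _ le_rfl).ne
        have hjk : y (j-1) ≠ y k := by
          intro h
          have := hinj (j-1) (by omega) k le_rfl h
          omega
        exact three_endpoints hmax dX dJ dK hxj hxk hjk hr1.symm hr2.symm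
      · -- swap the component of y k
        obtain ⟨hpec2, hsupp, hunreach, hnonab, hiffc, hswapmiss⟩ :=
          kempe (a := α) (b := β) hC hab (y k)
        set C₂ := kswap C α β (y k) with hC₂
        have hxval : ∀ z, C₂ s(x,z) = C s(x,z) := hunreach x hr2
        have chain2 : ∀ i < k, ∃ c, C₂ s(x, y (i+1)) = some c ∧ Miss C₂ (y i) c := by
          intro i hik
          by_cases hij : i + 1 = j
          · -- this fan edge is the β edge
            refine ⟨β, ?_, ?_⟩
            · rw [hxval, hij]
              exact hw
            · have hi' : i = j - 1 := by omega
              subst hi'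
              have hnr : ¬ H.Reachable (y k) (y (j-1)) := by
                intro h
                exact hr2 (h.trans hr1)
              have := hunreach (y (j-1)) hnr
              intro z hz
              rw [this z] at hz
              exact hmissβ z hz
          · obtain ⟨c, hc, hm⟩ := hchain i hik
            have hcα : c ≠ α := by
              intro h
              rw [h] at hc
              exact hα (y (i+1)) hc
            have hcβ : c ≠ β := by
              intro h
              rw [h] at hc
              have hne : y (i+1) ≠ y j := by
                intro h'
                exact hij (hinj (i+1) (by omega) j hj h')
              exact hC.2 x (y (i+1)) (y j) β hne hc hw
            refine ⟨c, (hiffc _ c hcα hcβ).2 hc, ?_⟩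
            intro z hz
            rw [hiffc _ c hcα hcβ] at hz
            exact hm z hz
        obtain ⟨C', h1, h2, h3⟩ := rotate hpec2 x k y hinj hadj
          (by rw [hsupp]; exact h0) chain2 α
          (fun z => by rw [hxval z]; exact hα z)
          (hswapmiss (y k) (Reachable.refl _) hβ)
        rw [hy0] at h3
        exact ⟨C', h1, fun e he => h2 e (fun hh => he ((hsupp e).1 hh)), h3⟩
    · -- swap the component of y (j-1)
      obtain ⟨hpec2, hsupp, hunreach, hnonab, hiffc, hswapmiss⟩ :=
        kempe (a := α) (b := β) hC hab (y (j-1))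
      set C₂ := kswap C α β (y (j-1)) with hC₂
      have hxval : ∀ z, C₂ s(x,z) = C s(x,z) := hunreach x hr1
      have chain2 : ∀ i < j - 1, ∃ c, C₂ s(x, y (i+1)) = some c ∧ Miss C₂ (y i) c := by
        intro i hij1
        obtain ⟨c, hc, hm⟩ := hchain i (by omega)
        have hcα : c ≠ α := by
          intro h
          rw [h] at hc
          exact hα (y (i+1)) hc
        have hcβ : c ≠ β := by
          intro h
          rw [h] at hc
          have hne : y (i+1) ≠ y j := by
            intro h'
            have := hinj (i+1) (by omega) j hj h'
            omega
          exact hC.2 x (y (i+1)) (y j) β hne hc hw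
        refine ⟨c, (hiffc _ c hcα hcβ).2 hc, ?_⟩
        intro z hz
        rw [hiffc _ c hcα hcβ] at hz
        exact hm z hz
      obtain ⟨C', h1, h2, h3⟩ := rotate hpec2 x (j-1) y
        (fun i hi i' hi' => hinj i (by omega) i' (by omega))
        (fun i hi => hadj i (by omega))
        (by rw [hsupp]; exact h0) chain2 α
        (fun z => by rw [hxval z]; exact hα z)
        (hswapmiss (y (j-1)) (Reachable.refl _) hmissβ)
      rw [hy0] at h3
      exact ⟨C', h1, fun e he => h2 e (fun hh => he ((hsupp e).1 hh)), h3⟩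

/-- Vizing: every edge can be colored. -/
lemma vizing [DecidableRel G.Adj] (hdeg : ∀ v, G.degree v ≤ r) :
    ∃ C : Sym2 V → Option (Fin (r+1)), IsPEC G r C ∧ ∀ e ∈ G.edgeFinset, C e ≠ none := by
  classical
  suffices h : ∀ S : Finset (Sym2 V), S ⊆ G.edgeFinset →
      ∃ C : Sym2 V → Option (Fin (r+1)), IsPEC G r C ∧ ∀ e ∈ S, C e ≠ none by
    exact h G.edgeFinset le_rfl
  intro S
  induction S using Finset.induction_on with
  | empty =>
    intro _
    exact ⟨fun _ => none, ⟨fun e c h => by simp at h, fun u v w c _ h => by simp at h⟩,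
      fun e he => absurd he (by simp)⟩
  | @insert e S heS ih =>
    intro hsub
    obtain ⟨C, hC, hcol⟩ := ih (fun e' he' => hsub (mem_insert_of_mem he'))
    by_cases he : C e = none
    · -- color the new edge
      have hedge : e ∈ G.edgeSet := by
        rw [← mem_edgeFinset]
        exact hsub (mem_insert_self e S)
      induction e using Sym2.ind with
      | _ u v =>
        obtain ⟨C', h1, h2, h3⟩ := extend hC hdeg u v (G.mem_edgeSet.1 hedge) he
        refine ⟨C', h1, ?_⟩
        intro e' he'
        rcases mem_insert.1 he' with rfl | he'
        · exact h3
        · exact h2 e' (hcol e' he')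
    · exact ⟨C, hC, fun e' he' => by
        rcases mem_insert.1 he' with rfl | he''
        · exact he
        · exact hcol e' he''⟩

end Vizing2

/-- The edges of an `r`-regular graph on `n` vertices can be partitioned into `r+1`
matchings listed in nondecreasing order of size, and in any such partition the second
matching has size at least `n/4`. -/
theorem stmt_4 {V : Type*} [Fintype V] [DecidableEq V] (G : SimpleGraph V)
    [DecidableRel G.Adj] (r : ℕ) (hr : 1 ≤ r) (hreg : G.IsRegularOfDegree r) :
    (∃ M : Fin (r + 1) → Finset (Sym2 V),
        (∀ i, ∀ e ∈ M i, e ∈ G.edgeFinset) ∧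
        (∀ i, ∀ e ∈ M i, ∀ e' ∈ M i, e ≠ e' → ∀ v ∈ e, v ∉ e') ∧
        (∀ i j, i ≠ j → Disjoint (M i) (M j)) ∧
        (∀ e ∈ G.edgeFinset, ∃ i, e ∈ M i) ∧
        Monotone fun i => (M i).card) ∧
    (∀ M : Fin (r + 1) → Finset (Sym2 V),
        (∀ i, ∀ e ∈ M i, e ∈ G.edgeFinset) →
        (∀ i, ∀ e ∈ M i, ∀ e' ∈ M i, e ≠ e' → ∀ v ∈ e, v ∉ e') →
        (∀ i j, i ≠ j → Disjoint (M i) (M j)) →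
        (∀ e ∈ G.edgeFinset, ∃ i, e ∈ M i) →
        (Monotone fun i => (M i).card) →
        (Fintype.card V : ℝ) / 4 ≤ ((M 1).card : ℝ)) := by
  classical
  constructor
  · -- existence of a sorted partition into r+1 matchings
    obtain ⟨C, hC, hcol⟩ := vizing (G := G) (r := r) (fun v => le_of_eq (hreg v))
    set M₀ : Fin (r+1) → Finset (Sym2 V) :=
      fun i => G.edgeFinset.filter (fun e => C e = some i) with hM₀
    set f : Fin (r+1) → ℕ := fun i => (M₀ i).card with hf
    set σ := Tuple.sort f with hσ
    refine ⟨fun i => M₀ (σ i), ?_, ?_, ?_, ?_, ?_⟩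
    · intro i e he
      exact (Finset.mem_filter.1 he).1
    · intro i e he e' he' hne v hv hv'
      have hce : C e = some (σ i) := (Finset.mem_filter.1 he).2
      have hce' : C e' = some (σ i) := (Finset.mem_filter.1 he').2
      obtain ⟨u, rfl⟩ := Sym2.mem_iff_exists.1 hv
      obtain ⟨u', rfl⟩ := Sym2.mem_iff_exists.1 hv'
      have huu : u ≠ u' := fun h => hne (by rw [h])
      exact hC.2 v u u' (σ i) huu hce hce'
    · intro i j hij
      rw [Finset.disjoint_left]
      intro e he he'
      have h1 : C e = some (σ i) := (Finset.mem_filter.1 he).2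
      have h2 : C e = some (σ j) := (Finset.mem_filter.1 he').2
      have : σ i = σ j := Option.some_injective _ (h1.symm.trans h2)
      exact hij (σ.injective this)
    · intro e he
      have := hcol e he
      obtain ⟨c, hc⟩ := Option.ne_none_iff_exists'.1 this
      refine ⟨σ.symm c, ?_⟩
      show e ∈ M₀ (σ (σ.symm c))
      rw [Equiv.apply_symm_apply]
      exact Finset.mem_filter.2 ⟨he, hc⟩
    · exact Tuple.monotone_sort f
  · -- second part
    intro M hsub hmatch hdisj hcover hmono
    set n := Fintype.card V with hn
    -- each matching has at most n/2 edges
    have hsize : ∀ i, 2 * (M i).card ≤ n := by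
      intro i
      -- endpoints of distinct edges in M i are disjoint
      have hcard2 : ∀ e ∈ M i, (univ.filter (· ∈ e)).card = 2 := by
        intro e he
        have hedge : e ∈ G.edgeSet := mem_edgeFinset.1 (hsub i e he)
        induction e using Sym2.ind with
        | _ u v =>
          have huv : u ≠ v := (G.mem_edgeSet.1 hedge).ne
          have : (univ.filter (· ∈ s(u,v))) = {u, v} := by
            ext w
            simp [Sym2.mem_iff]
          rw [this, card_insert_of_notMem (by simpa using huv), card_singleton]
      have hdisjt : (M i : Set (Sym2 V)).PairwiseDisjoint
          (fun e => univ.filter (· ∈ e)) := by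
        intro e he e' he' hne
        simp only [Finset.disjoint_left, mem_filter]
        rintro v ⟨-, hv⟩ ⟨-, hv'⟩
        exact hmatch i e he e' he' hne v hv hv'
      have hb := Finset.card_biUnion hdisjt
      have hle : ((M i).biUnion (fun e => univ.filter (· ∈ e))).card ≤ n := by
        rw [hn]
        simpa using Finset.card_le_univ _
      rw [hb] at hle
      calc 2 * (M i).card = ∑ e ∈ M i, 2 := by rw [Finset.sum_const]; ring
        _ = ∑ e ∈ M i, (univ.filter (· ∈ e)).card := by
              exact Finset.sum_congr rfl fun e he => (hcard2 e he).symm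
        _ ≤ n := hle
    -- the partition sums to |E|
    have hcover' : G.edgeFinset = univ.biUnion M := by
      ext e
      simp only [Finset.mem_biUnion, mem_univ, true_and]
      constructor
      · exact hcover e
      · rintro ⟨i, hi⟩; exact hsub i e hi
    have hsum : G.edgeFinset.card = ∑ i, (M i).card := by
      rw [hcover']
      exact Finset.card_biUnion (fun i _ j _ hij => hdisj i j hij)
    have hhs : n * r = 2 * G.edgeFinset.card := by
      rw [← G.sum_degrees_eq_twice_card_edges]
      simp [hreg _, hn, mul_comm]
    -- split the sum
    have h01 : (0 : Fin (r+1)) ≠ 1 := by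
      simp [Fin.ext_iff, Fin.val_one']
      omega
    have hsplit : ∑ i, (M i).card
        = (M 0).card + (M 1).card + ∑ i ∈ univ \ {0, 1}, (M i).card := by
      have : ({0, 1} : Finset (Fin (r+1))) ⊆ univ := subset_univ _
      rw [← Finset.sum_sdiff this, Finset.sum_pair h01]
      ring
    have hrest : ∑ i ∈ univ \ ({0, 1} : Finset (Fin (r+1))), 2 * (M i).card ≤ (r - 1) * n := by
      have hcard : (univ \ ({0, 1} : Finset (Fin (r+1)))).card = r - 1 := by
        rw [Finset.card_sdiff_of_subset (subset_univ _), Finset.card_pair h01]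
        simp
      calc ∑ i ∈ univ \ ({0, 1} : Finset (Fin (r+1))), 2 * (M i).card
          ≤ ∑ _i ∈ univ \ ({0, 1} : Finset (Fin (r+1))), n :=
            Finset.sum_le_sum (fun i _ => hsize i)
        _ = (r - 1) * n := by rw [Finset.sum_const, hcard]; ring
    have hm01 : (M 0).card ≤ (M 1).card := hmono (by exact Fin.zero_le 1)
    -- combine
    have key : n ≤ 4 * (M 1).card := by
      have e1 : n * r = 2 * ((M 0).card + (M 1).card + ∑ i ∈ univ \ {0, 1}, (M i).card) := by
        rw [hhs, hsum, hsplit]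
      have e2 : 2 * ∑ i ∈ univ \ ({0, 1} : Finset (Fin (r+1))), (M i).card ≤ (r-1) * n := by
        rw [Finset.mul_sum]; exact hrest
      have e3 : (r - 1) * n + n = n * r := by
        have : r - 1 + 1 = r := by omega
        calc (r-1) * n + n = ((r-1) + 1) * n := by ring
          _ = n * r := by rw [this]; ring
      omega
    rw [div_le_iff₀ (by norm_num : (0:ℝ) < 4)]
    have hR : (n:ℝ) ≤ 4 * ((M 1).card : ℝ) := by exact_mod_cast key
    linarith
end

section
/- Let H be a graph on the vertex set ⋃𝒳 where 𝒳 is the F-partition family of vertex classes X^a_i (a ∈ {3,4,5}, i ∈ [a], with X^a_1 refined into X^{a,3}_1, X^{a,4}_1, X^{a,5}_1), and suppose all edges of H lie inside the classes. Then H is an edge-disjoint union of atoms if and only if (1) e_H(X^a_1) = e_H(X^a_2) = ... = e_H(X^a_a) for all a ∈ {3,4,5}, and (2) e_H(X^{a,b}_1) = e_H(X^{b,a}_1) for all a, b ∈ {3,4,5}. -/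
open Finset

variable {V : Type*} [Fintype V] [DecidableEq V]

def threeFourFive : Finset ℕ := {3, 4, 5}

/-- `O` is an `{a}`-atom: a matching of `a` edges, one inside `X^{a,a}_1 = Xab a a`
and one inside each `X^a_i = Xi a i` for `i ∈ {2,…,a}`. -/
def IsSingleAtom (Xab : ℕ → ℕ → Finset V) (Xi : ℕ → ℕ → Finset V) (a : ℕ)
    (O : Finset (Sym2 V)) : Prop :=
  O.card = a ∧ (O.filter (· ∈ (Xab a a).sym2)).card = 1 ∧
    ∀ i ∈ Finset.Icc 2 a, (O.filter (· ∈ (Xi a i).sym2)).card = 1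

/-- `O` is an `{a,b}`-atom (for `a ≠ b`): a matching of `a+b` edges, one inside each of
`X^{a,b}_1`, `X^{b,a}_1`, each `X^a_i` (`2 ≤ i ≤ a`) and each `X^b_i` (`2 ≤ i ≤ b`). -/
def IsPairAtom (Xab : ℕ → ℕ → Finset V) (Xi : ℕ → ℕ → Finset V) (a b : ℕ)
    (O : Finset (Sym2 V)) : Prop :=
  O.card = a + b ∧ (O.filter (· ∈ (Xab a b).sym2)).card = 1 ∧
    (O.filter (· ∈ (Xab b a).sym2)).card = 1 ∧
    (∀ i ∈ Finset.Icc 2 a, (O.filter (· ∈ (Xi a i).sym2)).card = 1) ∧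
    (∀ i ∈ Finset.Icc 2 b, (O.filter (· ∈ (Xi b i).sym2)).card = 1)

def IsAtomOf (Xab : ℕ → ℕ → Finset V) (Xi : ℕ → ℕ → Finset V)
    (O : Finset (Sym2 V)) : Prop :=
  (∃ a ∈ threeFourFive, IsSingleAtom Xab Xi a O) ∨
    (∃ a ∈ threeFourFive, ∃ b ∈ threeFourFive, a ≠ b ∧ IsPairAtom Xab Xi a b O)

/-! Count the edges inside each class. An atom contributes exactly the indicator function of
its classes, and this indicator satisfies both (linear) conditions; summing over the atoms
gives necessity. Conversely, if the conditions hold and `H` has an edge, then some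
`X^{a,b}_1` contains an edge, hence by the conditions so do `X^{b,a}_1` and every `X^a_i` and
`X^b_i`. Picking one edge in each of these classes gives an atom (an `{a}`-atom when `a = b`),
and removing it preserves both conditions, so induction on the number of edges finishes. -/

theorem Finset.disjoint_sym2 {α : Type*} {s t : Finset α} (h : Disjoint s t) :
    Disjoint s.sym2 t.sym2 := by
  rw [Finset.disjoint_left]
  intro e hs ht
  induction e with
  | _ x y =>
    exact Finset.disjoint_left.mp h (mk_mem_sym2_iff.mp hs).1 (mk_mem_sym2_iff.mp ht).1

theorem Set.PairwiseDisjoint.eq_of_mem_sym2 {α ι : Type*} {C : ι → Finset α} {S : Set ι}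
    (hC : S.PairwiseDisjoint C) {i j : ι} (hi : i ∈ S) (hj : j ∈ S) {e : Sym2 α}
    (hei : e ∈ (C i).sym2) (hej : e ∈ (C j).sym2) : i = j := by
  by_contra hne
  exact Finset.disjoint_left.mp (Finset.disjoint_sym2 (hC hi hj hne)) hei hej

section EdgeCount

variable {α ι : Type*} [DecidableEq α]

def edgeCount (E : Finset (Sym2 α)) (X : Finset α) : ℕ := #{e ∈ E | e ∈ X.sym2}

theorem edgeCount_sdiff_add {E O : Finset (Sym2 α)} (h : O ⊆ E) (X : Finset α) :
    edgeCount (E \ O) X + edgeCount O X = edgeCount E X := by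
  rw [edgeCount, edgeCount, ← card_union_of_disjoint (disjoint_filter_filter sdiff_disjoint),
    ← filter_union, sdiff_union_of_subset h, edgeCount]

theorem edgeCount_biUnion_id {𝒜 : Finset (Finset (Sym2 α))}
    (h𝒜 : (𝒜 : Set (Finset (Sym2 α))).PairwiseDisjoint id) (X : Finset α) :
    edgeCount (𝒜.biUnion id) X = ∑ O ∈ 𝒜, edgeCount O X := by
  rw [edgeCount, filter_biUnion, card_biUnion]
  · rfl
  · exact fun O hO O' hO' hne => disjoint_filter_filter (h𝒜 hO hO' hne)

variable {C : ι → Finset α} {S : Set ι}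

theorem pairwiseDisjoint_filter_mem_sym2 (hC : S.PairwiseDisjoint C) {T : Finset ι}
    (hT : ↑T ⊆ S) (E : Finset (Sym2 α)) :
    (T : Set ι).PairwiseDisjoint fun j => {e ∈ E | e ∈ (C j).sym2} :=
  fun _ hi _ hj hne =>
    disjoint_filter.mpr fun _ _ hei hej => hne (hC.eq_of_mem_sym2 (hT hi) (hT hj) hei hej)

theorem sum_edgeCount_le_card (hC : S.PairwiseDisjoint C) {T : Finset ι} (hT : ↑T ⊆ S)
    (E : Finset (Sym2 α)) : ∑ j ∈ T, edgeCount E (C j) ≤ #E := by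
  simp only [edgeCount]
  rw [← card_biUnion (pairwiseDisjoint_filter_mem_sym2 hC hT E)]
  exact card_le_card (biUnion_subset.mpr fun _ _ => filter_subset _ _)

theorem edgeCount_biUnion (hC : S.PairwiseDisjoint C) {E : Finset (Sym2 α)}
    (hE : ∀ e ∈ E, ∃ j ∈ S, e ∈ (C j).sym2) {T : Finset ι} (hT : ↑T ⊆ S) :
    edgeCount E (T.biUnion C) = ∑ j ∈ T, edgeCount E (C j) := by
  have hfilter :
      {e ∈ E | e ∈ (T.biUnion C).sym2} = T.biUnion fun j => {e ∈ E | e ∈ (C j).sym2} := by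
    ext e
    simp only [mem_filter, mem_biUnion]
    constructor
    · rintro ⟨he, heT⟩
      obtain ⟨k, hk, hek⟩ := hE e he
      obtain ⟨t, ht, hxt⟩ := mem_biUnion.mp (mem_sym2_iff.mp heT _ (Sym2.out_fst_mem e))
      obtain rfl := hC.elim_finset hk (hT ht) _ (mem_sym2_iff.mp hek _ (Sym2.out_fst_mem e)) hxt
      exact ⟨k, ht, he, hek⟩
    · rintro ⟨t, ht, he, het⟩
      exact ⟨he, sym2_mono (subset_biUnion_of_mem C ht) het⟩
  rw [edgeCount, hfilter, card_biUnion (pairwiseDisjoint_filter_mem_sym2 hC hT E)]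
  rfl

def IsTransversal (C : ι → Finset α) (I : Finset ι) (O : Finset (Sym2 α)) : Prop :=
  #O = #I ∧ ∀ j ∈ I, edgeCount O (C j) = 1

theorem IsTransversal.edgeCount_eq [DecidableEq ι] (hC : S.PairwiseDisjoint C) {I : Finset ι}
    (hI : ↑I ⊆ S) {O : Finset (Sym2 α)} (hO : IsTransversal C I O) {j : ι} (hj : j ∈ S) :
    edgeCount O (C j) = if j ∈ I then 1 else 0 := by
  split_ifs with hjI
  · exact hO.2 j hjI
  · -- the classes of `insert j I` already use up the `#O = #I` edges without `C j`
    have hle := sum_edgeCount_le_card hC (T := insert j I)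
      (by simpa [Set.insert_subset_iff] using ⟨hj, hI⟩) O
    rw [sum_insert hjI, sum_congr rfl hO.2, sum_const, smul_eq_mul, mul_one, hO.1] at hle
    omega

theorem exists_isTransversal (hC : S.PairwiseDisjoint C) {I : Finset ι} (hI : ↑I ⊆ S)
    {E : Finset (Sym2 α)} (hE : ∀ j ∈ I, edgeCount E (C j) ≠ 0) :
    ∃ O ⊆ E, IsTransversal C I O := by
  have hex : ∀ j ∈ I, ∃ e ∈ E, e ∈ (C j).sym2 := fun j hj => by
    simpa [edgeCount, filter_nonempty_iff] using hE j hj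
  choose f hfE hfC using fun j : I => hex j j.2
  have hinj : Function.Injective f := fun i j hij =>
    Subtype.ext (hC.eq_of_mem_sym2 (hI i.2) (hI j.2) (hfC i) (hij ▸ hfC j))
  have hcard : #(I.attach.image f) = #I := by rw [card_image_of_injective _ hinj, card_attach]
  refine ⟨I.attach.image f, image_subset_iff.mpr fun j _ => hfE j, hcard, ?_⟩
  have hpos : ∀ j ∈ I, 1 ≤ edgeCount (I.attach.image f) (C j) := fun j hj =>
    card_pos.mpr
      ⟨f ⟨j, hj⟩, mem_filter.mpr ⟨mem_image_of_mem f (mem_attach _ _), hfC _⟩⟩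
  -- the `#I` counts are all positive and sum to at most `#I`, so they all equal `1`
  have hle := sum_edgeCount_le_card hC hI (I.attach.image f)
  rw [hcard, card_eq_sum_ones] at hle
  exact fun j hj =>
    ((sum_eq_sum_iff_of_le hpos).mp (le_antisymm (sum_le_sum hpos) hle) j hj).symm

end EdgeCount

/-- `.inl (a, b)` indexes `X^{a,b}_1` and `.inr (a, i)` indexes `X^a_i`. -/
abbrev PartIdx := (ℕ × ℕ) ⊕ (ℕ × ℕ)

def part {α : Type*} (Xab Xi : ℕ → ℕ → Finset α) : PartIdx → Finset α
  | .inl (a, b) => Xab a b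
  | .inr (a, i) => Xi a i

def partIdxs : Set PartIdx :=
  {j | j.elim (fun p => p.1 ∈ threeFourFive ∧ p.2 ∈ threeFourFive)
    (fun p => p.1 ∈ threeFourFive ∧ p.2 ∈ Icc 2 p.1)}

theorem pairwiseDisjoint_part {α : Type*} {Xab Xi : ℕ → ℕ → Finset α}
    (hdisj1 : ∀ a ∈ threeFourFive, ∀ b ∈ threeFourFive, ∀ a' ∈ threeFourFive,
      ∀ b' ∈ threeFourFive, (a, b) ≠ (a', b') → Disjoint (Xab a b) (Xab a' b'))
    (hdisj2 : ∀ a ∈ threeFourFive, ∀ i ∈ Finset.Icc 2 a, ∀ a' ∈ threeFourFive,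
      ∀ i' ∈ Finset.Icc 2 a', (a, i) ≠ (a', i') → Disjoint (Xi a i) (Xi a' i'))
    (hdisj3 : ∀ a ∈ threeFourFive, ∀ b ∈ threeFourFive, ∀ a' ∈ threeFourFive,
      ∀ i' ∈ Finset.Icc 2 a', Disjoint (Xab a b) (Xi a' i')) :
    partIdxs.PairwiseDisjoint (part Xab Xi) := by
  rintro (⟨a, b⟩ | ⟨a, i⟩) ⟨ha, hb⟩ (⟨a', b'⟩ | ⟨a', i'⟩) ⟨ha', hb'⟩ hne
  · exact hdisj1 a ha b hb a' ha' b' hb' fun h => hne (congrArg Sum.inl h)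
  · exact hdisj3 a ha b hb a' ha' i' hb'
  · exact (hdisj3 a' ha' b' hb' a ha i hb).symm
  · exact hdisj2 a ha i hb a' ha' i' hb' fun h => hne (congrArg Sum.inr h)

def rowIdx (a : ℕ) : Finset PartIdx := (Icc 2 a).image fun i => .inr (a, i)

/-- The classes met by an `{a,b}`-atom; for `a = b` these are the classes of an `{a}`-atom. -/
def atomIdx (a b : ℕ) : Finset PartIdx :=
  insert (.inl (a, b)) (insert (.inl (b, a)) (rowIdx a ∪ rowIdx b))

theorem atomIdx_subset_partIdxs {a b : ℕ} (ha : a ∈ threeFourFive) (hb : b ∈ threeFourFive) :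
    ↑(atomIdx a b) ⊆ partIdxs := by
  intro j hj
  simp only [atomIdx, rowIdx, coe_insert, coe_union, coe_image, Set.mem_insert_iff,
    Set.mem_union, Set.mem_image, mem_coe] at hj
  rcases hj with rfl | rfl | ⟨i, hi, rfl⟩ | ⟨i, hi, rfl⟩
  exacts [⟨ha, hb⟩, ⟨hb, ha⟩, ⟨ha, hi⟩, ⟨hb, hi⟩]

theorem card_atomIdx : ∀ a ∈ threeFourFive, ∀ b ∈ threeFourFive,
    #(atomIdx a b) = if a = b then a else a + b := by
  decide

/-- Conditions (1) and (2) of the theorem for the vector `n` of edge counts of the classes. -/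
def IsBalanced (n : PartIdx → ℕ) : Prop :=
  (∀ a ∈ threeFourFive, ∀ i ∈ Icc 2 a,
      n (.inr (a, i)) = ∑ b ∈ threeFourFive, n (.inl (a, b))) ∧
    ∀ a ∈ threeFourFive, ∀ b ∈ threeFourFive, n (.inl (a, b)) = n (.inl (b, a))

theorem IsBalanced.congr {n m : PartIdx → ℕ} (hn : IsBalanced n)
    (h : ∀ j ∈ partIdxs, n j = m j) : IsBalanced m := by
  refine ⟨fun a ha i hi => ?_, fun a ha b hb => ?_⟩
  · rw [← h (.inr (a, i)) ⟨ha, hi⟩, hn.1 a ha i hi]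
    exact sum_congr rfl fun b hb => h (.inl (a, b)) ⟨ha, hb⟩
  · rw [← h (.inl (a, b)) ⟨ha, hb⟩, ← h (.inl (b, a)) ⟨hb, ha⟩]
    exact hn.2 a ha b hb

theorem isBalanced_sum {β : Type*} {s : Finset β} {n : β → PartIdx → ℕ}
    (h : ∀ x ∈ s, IsBalanced (n x)) : IsBalanced fun j => ∑ x ∈ s, n x j := by
  refine ⟨fun a ha i hi => ?_, fun a ha b hb => sum_congr rfl fun x hx => (h x hx).2 a ha b hb⟩
  rw [sum_comm]
  exact sum_congr rfl fun x hx => (h x hx).1 a ha i hi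

theorem IsBalanced.of_add {n m : PartIdx → ℕ} (h : IsBalanced fun j => n j + m j)
    (hm : IsBalanced m) : IsBalanced n := by
  refine ⟨fun a ha i hi => ?_, fun a ha b hb => ?_⟩
  · have := h.1 a ha i hi
    dsimp only at this
    rw [sum_add_distrib, hm.1 a ha i hi] at this
    omega
  · have := h.2 a ha b hb
    dsimp only at this
    rw [hm.2 a ha b hb] at this
    omega

theorem isBalanced_indicator_atomIdx : ∀ a ∈ threeFourFive, ∀ b ∈ threeFourFive,
    IsBalanced fun j => if j ∈ atomIdx a b then 1 else 0 := by
  unfold IsBalanced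
  decide

theorem IsBalanced.exists_atomIdx {n : PartIdx → ℕ} (hn : IsBalanced n) {j : PartIdx}
    (hj : j ∈ partIdxs) (hnj : n j ≠ 0) :
    ∃ a ∈ threeFourFive, ∃ b ∈ threeFourFive, ∀ k ∈ atomIdx a b, n k ≠ 0 := by
  have hrow : ∀ a ∈ threeFourFive, ∀ b ∈ threeFourFive, n (.inl (a, b)) ≠ 0 →
      ∀ i ∈ Icc 2 a, n (.inr (a, i)) ≠ 0 := fun a ha b hb hab i hi => by
    rw [hn.1 a ha i hi]
    exact fun h0 => hab (sum_eq_zero_iff.mp h0 b hb)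
  obtain ⟨a, ha, b, hb, hab⟩ :
      ∃ a ∈ threeFourFive, ∃ b ∈ threeFourFive, n (.inl (a, b)) ≠ 0 := by
    rcases j with ⟨a, b⟩ | ⟨a, i⟩
    · exact ⟨a, hj.1, b, hj.2, hnj⟩
    · rw [hn.1 a hj.1 i hj.2] at hnj
      obtain ⟨b, hb, hab⟩ := exists_ne_zero_of_sum_ne_zero hnj
      exact ⟨a, hj.1, b, hb, hab⟩
  have hba : n (.inl (b, a)) ≠ 0 := hn.2 a ha b hb ▸ hab
  refine ⟨a, ha, b, hb, fun k hk => ?_⟩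
  simp only [atomIdx, rowIdx, mem_insert, mem_union, mem_image] at hk
  rcases hk with rfl | rfl | ⟨i, hi, rfl⟩ | ⟨i, hi, rfl⟩
  exacts [hab, hba, hrow a ha b hb hab i hi, hrow b hb a ha hba i hi]

section Atoms

variable {α : Type*} [DecidableEq α] {Xab Xi : ℕ → ℕ → Finset α}

theorem isSingleAtom_iff_isTransversal {a : ℕ} (ha : a ∈ threeFourFive) {O : Finset (Sym2 α)} :
    IsSingleAtom Xab Xi a O ↔ IsTransversal (part Xab Xi) (atomIdx a a) O := by
  rw [IsTransversal, card_atomIdx a ha a ha, if_pos rfl]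
  simp only [IsSingleAtom, atomIdx, rowIdx, forall_mem_insert, forall_mem_union, forall_mem_image,
    insert_idem, and_self, edgeCount, part]
  rfl

theorem isPairAtom_iff_isTransversal {a b : ℕ} (ha : a ∈ threeFourFive)
    (hb : b ∈ threeFourFive) (hab : a ≠ b) {O : Finset (Sym2 α)} :
    IsPairAtom Xab Xi a b O ↔ IsTransversal (part Xab Xi) (atomIdx a b) O := by
  rw [IsTransversal, card_atomIdx a ha b hb, if_neg hab]
  simp only [IsPairAtom, atomIdx, rowIdx, forall_mem_insert, forall_mem_union, forall_mem_image,
    edgeCount, part]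
  rfl

theorem isAtomOf_iff_exists_isTransversal {O : Finset (Sym2 α)} :
    IsAtomOf Xab Xi O ↔
      ∃ a ∈ threeFourFive, ∃ b ∈ threeFourFive,
        IsTransversal (part Xab Xi) (atomIdx a b) O := by
  constructor
  · rintro (⟨a, ha, hO⟩ | ⟨a, ha, b, hb, hab, hO⟩)
    · exact ⟨a, ha, a, ha, (isSingleAtom_iff_isTransversal ha).mp hO⟩
    · exact ⟨a, ha, b, hb, (isPairAtom_iff_isTransversal ha hb hab).mp hO⟩
  · rintro ⟨a, ha, b, hb, hO⟩
    obtain rfl | hab := eq_or_ne a b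
    · exact .inl ⟨a, ha, (isSingleAtom_iff_isTransversal ha).mpr hO⟩
    · exact .inr ⟨a, ha, b, hb, hab, (isPairAtom_iff_isTransversal ha hb hab).mpr hO⟩

theorem IsAtomOf.isBalanced (hC : partIdxs.PairwiseDisjoint (part Xab Xi))
    {O : Finset (Sym2 α)} (hO : IsAtomOf Xab Xi O) :
    IsBalanced fun j => edgeCount O (part Xab Xi j) := by
  obtain ⟨a, ha, b, hb, hT⟩ := isAtomOf_iff_exists_isTransversal.mp hO
  exact (isBalanced_indicator_atomIdx a ha b hb).congr fun j hj =>
    (hT.edgeCount_eq hC (atomIdx_subset_partIdxs ha hb) hj).symm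

theorem exists_atom_decomposition (hC : partIdxs.PairwiseDisjoint (part Xab Xi))
    {E : Finset (Sym2 α)} (hE : ∀ e ∈ E, ∃ j ∈ partIdxs, e ∈ (part Xab Xi j).sym2)
    (hbal : IsBalanced fun j => edgeCount E (part Xab Xi j)) :
    ∃ 𝒜 : Finset (Finset (Sym2 α)), (∀ O ∈ 𝒜, IsAtomOf Xab Xi O) ∧
      (𝒜 : Set (Finset (Sym2 α))).PairwiseDisjoint id ∧ E = 𝒜.biUnion id := by
  induction E using Finset.strongInduction with
  | H E ih =>
  obtain rfl | ⟨e, he⟩ := E.eq_empty_or_nonempty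
  · exact ⟨∅, by simp, by simp, by simp⟩
  obtain ⟨j, hj, hej⟩ := hE e he
  obtain ⟨a, ha, b, hb, hne⟩ :=
    hbal.exists_atomIdx hj (card_ne_zero_of_mem (mem_filter.mpr ⟨he, hej⟩))
  obtain ⟨O, hOE, hO⟩ := exists_isTransversal hC (atomIdx_subset_partIdxs ha hb) hne
  have hatom : IsAtomOf Xab Xi O := isAtomOf_iff_exists_isTransversal.mpr ⟨a, ha, b, hb, hO⟩
  have hO_nonempty : O.Nonempty := card_pos.mp (hO.1 ▸ card_pos.mpr ⟨_, mem_insert_self _ _⟩)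
  have hrest : IsBalanced fun j => edgeCount (E \ O) (part Xab Xi j) :=
    IsBalanced.of_add (by simpa only [edgeCount_sdiff_add hOE] using hbal) (hatom.isBalanced hC)
  obtain ⟨𝒜, h𝒜, hdisj, hcover⟩ := ih (E \ O) (sdiff_ssubset hOE hO_nonempty)
    (fun e he => hE e (mem_sdiff.mp he).1) hrest
  refine ⟨insert O 𝒜, forall_mem_insert _ _ _ |>.mpr ⟨hatom, h𝒜⟩, ?_, ?_⟩
  · rw [coe_insert]
    exact hdisj.insert fun Q hQ _ =>
      disjoint_of_subset_right (hcover ▸ subset_biUnion_of_mem id hQ) disjoint_sdiff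
  · rw [biUnion_insert, ← hcover, id, union_sdiff_of_subset hOE]

theorem edgeCount_union_three (hC : partIdxs.PairwiseDisjoint (part Xab Xi))
    {E : Finset (Sym2 α)} (hE : ∀ e ∈ E, ∃ j ∈ partIdxs, e ∈ (part Xab Xi j).sym2)
    {a : ℕ} (ha : a ∈ threeFourFive) :
    edgeCount E (Xab a 3 ∪ Xab a 4 ∪ Xab a 5) =
      ∑ b ∈ threeFourFive, edgeCount E (Xab a b) := by
  have hT : ↑(threeFourFive.image fun b => (.inl (a, b) : PartIdx)) ⊆ partIdxs := by
    intro j hj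
    obtain ⟨b, hb, rfl⟩ := mem_image.mp hj
    exact ⟨ha, hb⟩
  have h := edgeCount_biUnion hC hE hT
  rw [sum_image fun _ _ _ _ h => by simpa using h] at h
  simp only [part] at h
  convert h using 2
  simp [threeFourFive, part, union_assoc]

end Atoms

/-- Fact 4.8: a graph `H` whose edges all lie inside the classes of an `F`-partition is
an edge-disjoint union of atoms iff `e_H(X^a_1) = ⋯ = e_H(X^a_a)` for all `a ∈ {3,4,5}`
and `e_H(X^{a,b}_1) = e_H(X^{b,a}_1)` for all `a,b ∈ {3,4,5}`. -/
theorem stmt_6 (H : SimpleGraph V) [DecidableRel H.Adj]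
    (Xab : ℕ → ℕ → Finset V) (Xi : ℕ → ℕ → Finset V)
    -- the classes are pairwise disjoint
    (hdisj1 : ∀ a ∈ threeFourFive, ∀ b ∈ threeFourFive, ∀ a' ∈ threeFourFive,
      ∀ b' ∈ threeFourFive, (a, b) ≠ (a', b') → Disjoint (Xab a b) (Xab a' b'))
    (hdisj2 : ∀ a ∈ threeFourFive, ∀ i ∈ Finset.Icc 2 a, ∀ a' ∈ threeFourFive,
      ∀ i' ∈ Finset.Icc 2 a', (a, i) ≠ (a', i') → Disjoint (Xi a i) (Xi a' i'))
    (hdisj3 : ∀ a ∈ threeFourFive, ∀ b ∈ threeFourFive, ∀ a' ∈ threeFourFive,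
      ∀ i' ∈ Finset.Icc 2 a', Disjoint (Xab a b) (Xi a' i'))
    -- all edges of H lie inside classes
    (hin : ∀ e ∈ H.edgeFinset,
      (∃ a ∈ threeFourFive, ∃ b ∈ threeFourFive, e ∈ (Xab a b).sym2) ∨
      (∃ a ∈ threeFourFive, ∃ i ∈ Finset.Icc 2 a, e ∈ (Xi a i).sym2)) :
    (∃ 𝒜 : Finset (Finset (Sym2 V)),
        (∀ O ∈ 𝒜, IsAtomOf Xab Xi O) ∧
        (∀ O ∈ 𝒜, ∀ O' ∈ 𝒜, O ≠ O' → Disjoint O O') ∧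
        H.edgeFinset = 𝒜.biUnion id) ↔
      ((∀ a ∈ threeFourFive, ∀ i ∈ Finset.Icc 2 a,
          (H.edgeFinset.filter
            (· ∈ (Xab a 3 ∪ Xab a 4 ∪ Xab a 5).sym2)).card =
          (H.edgeFinset.filter (· ∈ (Xi a i).sym2)).card) ∧
       (∀ a ∈ threeFourFive, ∀ b ∈ threeFourFive,
          (H.edgeFinset.filter (· ∈ (Xab a b).sym2)).card =
          (H.edgeFinset.filter (· ∈ (Xab b a).sym2)).card)) := by
  have hC := pairwiseDisjoint_part hdisj1 hdisj2 hdisj3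
  have hE : ∀ e ∈ H.edgeFinset, ∃ j ∈ partIdxs, e ∈ (part Xab Xi j).sym2 := fun e he => by
    rcases hin e he with ⟨a, ha, b, hb, h⟩ | ⟨a, ha, i, hi, h⟩
    exacts [⟨.inl (a, b), ⟨ha, hb⟩, h⟩, ⟨.inr (a, i), ⟨ha, hi⟩, h⟩]
  trans IsBalanced fun j => edgeCount H.edgeFinset (part Xab Xi j)
  · constructor
    · rintro ⟨𝒜, h𝒜, hdisj, hH⟩
      simp_rw [hH, edgeCount_biUnion_id fun O hO O' hO' => hdisj O hO O' hO']
      exact isBalanced_sum fun O hO => (h𝒜 O hO).isBalanced hC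
    · intro hbal
      obtain ⟨𝒜, h𝒜, hdisj, hH⟩ := exists_atom_decomposition hC hE hbal
      exact ⟨𝒜, h𝒜, fun O hO O' hO' => hdisj hO hO', hH⟩
  · refine and_congr (forall₂_congr fun a ha => forall₂_congr fun i _ => ?_) Iff.rfl
    have hrow := edgeCount_union_three hC hE ha
    simp only [edgeCount, part] at hrow ⊢
    rw [hrow]
    exact eq_comm
end

section
/- Let L' be a bipartite graph between vertex sets A and B with e(L') even and 2·(2Δ(L')) ≤ e(L'). Then the edge set of L' can be partitioned into matchings each of size exactly 2. -/
/-!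
Two edges of `G` form a matching exactly when they are adjacent in the complement of the line
graph. In that graph an edge `ab` is non-adjacent to at most `deg a + deg b - 2 ≤ e/2 - 2` other
edges, so its minimum degree exceeds half its (even) order `e`, and a Dirac-type augmenting
argument on a maximum matching yields a perfect matching. Its edges are the required pairs.
-/

namespace SimpleGraph

variable {V : Type*} {G : SimpleGraph V}

namespace Subgraph

variable {M : G.Subgraph} {u v x y : V}

lemma isMatching_bot : (⊥ : G.Subgraph).IsMatching := fun _ hv => hv.elim

lemma IsMatching.sup_subgraphOfAdj (hM : M.IsMatching) (hu : u ∉ M.verts) (hv : v ∉ M.verts)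
    (huv : G.Adj u v) : (M ⊔ G.subgraphOfAdj huv).IsMatching := by
  refine hM.sup (.subgraphOfAdj huv) ?_
  rw [hM.support_eq_verts, (IsMatching.subgraphOfAdj huv).support_eq_verts, subgraphOfAdj_verts]
  simp [Set.disjoint_insert_right, hu, hv]

lemma IsMatching.deleteVerts_pair (hM : M.IsMatching) (hxy : M.Adj x y) :
    (M.deleteVerts {x, y}).IsMatching := by
  intro v hv
  rw [deleteVerts_verts] at hv
  obtain ⟨w, hvw, huniq⟩ := hM hv.1
  have hw : w ∉ ({x, y} : Set V) := by
    rintro (rfl | rfl)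
    · exact hv.2 (.inr (hM.eq_of_adj_right hvw hxy.symm))
    · exact hv.2 (.inl (hM.eq_of_adj_right hvw hxy))
  exact ⟨w, deleteVerts_adj.2 ⟨hv.1, hv.2, M.edge_vert hvw.symm, hw, hvw⟩,
    fun w' h => huniq w' (deleteVerts_adj.1 h).2.2.2.2⟩

/-- Replacing the matching edge `xy` by `ux` and `vy` covers two more vertices. -/
lemma IsMatching.exists_verts_ssubset_of_adj (hM : M.IsMatching) (hxy : M.Adj x y)
    (hu : u ∉ M.verts) (hv : v ∉ M.verts) (huv : u ≠ v) (hux : G.Adj u x) (hvy : G.Adj v y) :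
    ∃ M' : G.Subgraph, M'.IsMatching ∧ M.verts ⊂ M'.verts := by
  have hvx : v ≠ x := ne_of_mem_of_not_mem (M.edge_vert hxy) hv |>.symm
  have hyu : y ≠ u := ne_of_mem_of_not_mem (M.edge_vert hxy.symm) hu
  have hyx : y ≠ x := (M.adj_sub hxy).ne.symm
  have hM₁ := hM.deleteVerts_pair hxy
  have hM₂ := hM₁.sup_subgraphOfAdj (by simp [hu]) (by simp) hux
  have hM₃ := hM₂.sup_subgraphOfAdj (by simp [hv, huv.symm, hvx]) (by simp [hyu, hyx]) hvy
  refine ⟨_, hM₃, Set.ssubset_iff_of_subset ?_ |>.2 ⟨u, by simp, hu⟩⟩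
  intro w hw
  simp only [verts_sup, deleteVerts_verts, subgraphOfAdj_verts]
  by_cases w = x <;> by_cases w = y <;> simp_all

lemma IsMatching.exists_notMem_verts_ne [Fintype V] (hM : M.IsMatching)
    (heven : Even (Fintype.card V)) (hu : u ∉ M.verts) : ∃ v ∉ M.verts, v ≠ u := by
  classical
  by_contra! h
  have hverts : M.verts.toFinset = Finset.univ.erase u := by
    ext w
    simp only [Set.mem_toFinset, Finset.mem_erase, Finset.mem_univ, and_true]
    exact ⟨fun hw => ne_of_mem_of_not_mem hw hu, fun hw => by_contra fun hw' => hw (h w hw')⟩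
  have hodd := hM.even_card
  rw [hverts, Finset.card_erase_of_mem (Finset.mem_univ u), Finset.card_univ] at hodd
  have : 0 < Fintype.card V := Fintype.card_pos_iff.2 ⟨u⟩
  obtain ⟨k, hk⟩ := heven
  obtain ⟨j, hj⟩ := hodd
  omega

lemma IsMatching.ncard_partners_neighborSet (hM : M.IsMatching) (hv : G.neighborSet v ⊆ M.verts) :
    {x | ∃ y, M.Adj x y ∧ G.Adj v y}.ncard = (G.neighborSet v).ncard := by
  symm
  refine Set.ncard_congr (fun y hy => (hM (hv hy)).choose)
    (fun y hy => ⟨y, (hM (hv hy)).choose_spec.1.symm, hy⟩)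
    (fun a b ha hb hab =>
      hM.eq_of_adj_right (hM (hv ha)).choose_spec.1 (hab ▸ (hM (hv hb)).choose_spec.1)) ?_
  rintro x ⟨y, hxy, hvy⟩
  exact ⟨y, hvy, hM.eq_of_adj_left (hM (hv hvy)).choose_spec.1 hxy.symm⟩

/-- The neighbours of `u` and the partners of the neighbours of `v` have total size more
than `|V|`, so they meet. -/
lemma IsMatching.exists_adj_adj_of_card_lt_degree_add_degree [Fintype V] [DecidableRel G.Adj]
    (hM : M.IsMatching) (hv : G.neighborSet v ⊆ M.verts)
    (hdeg : Fintype.card V < G.degree u + G.degree v) :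
    ∃ x y, G.Adj u x ∧ M.Adj x y ∧ G.Adj v y := by
  have hncard (w : V) : (G.neighborSet w).ncard = G.degree w := by
    rw [Set.ncard_eq_toFinset_card', ← card_neighborSet_eq_degree, Set.toFinset_card]
  set T := {x | ∃ y, M.Adj x y ∧ G.Adj v y}
  have hunion := Set.ncard_union_add_ncard_inter (G.neighborSet u) T
  rw [hM.ncard_partners_neighborSet hv, hncard, hncard] at hunion
  have hle := Set.ncard_le_card (G.neighborSet u ∪ T)
  rw [Nat.card_eq_fintype_card] at hle
  obtain ⟨x, hux, y, hxy, hvy⟩ :=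
    Set.nonempty_of_ncard_ne_zero (s := G.neighborSet u ∩ T) (by omega)
  exact ⟨x, y, hux, hxy, hvy⟩

end Subgraph

/-- In a maximum matching, two unmatched vertices `u, v` would have all their neighbours matched,
and some matching edge `xy` with `u ~ x`, `v ~ y` could be swapped for `ux` and `vy`. -/
theorem exists_isPerfectMatching_of_card_lt_two_mul_degree [Fintype V] [DecidableRel G.Adj]
    (heven : Even (Fintype.card V)) (hdeg : ∀ v, Fintype.card V < 2 * G.degree v) :
    ∃ M : G.Subgraph, M.IsPerfectMatching := by
  obtain ⟨M, hM, hmax⟩ := Set.exists_max_image {M : G.Subgraph | M.IsMatching}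
    (fun M => M.verts.ncard) (Set.toFinite _) ⟨⊥, Subgraph.isMatching_bot⟩
  have not_ssubset (M' : G.Subgraph) (hM' : M'.IsMatching) : ¬ M.verts ⊂ M'.verts :=
    fun h => (hmax M' hM').not_gt (Set.ncard_lt_ncard h)
  refine ⟨M, hM, fun u => by_contra fun hu => ?_⟩
  obtain ⟨v, hv, hvu⟩ := hM.exists_notMem_verts_ne heven hu
  have hNv : G.neighborSet v ⊆ M.verts := fun w (hvw : G.Adj v w) => by_contra fun hw =>
    not_ssubset _ (hM.sup_subgraphOfAdj hv hw hvw)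
      (Set.ssubset_iff_of_subset Set.subset_union_left |>.2 ⟨v, .inr (Set.mem_insert v _), hv⟩)
  obtain ⟨x, y, hux, hxy, hvy⟩ := hM.exists_adj_adj_of_card_lt_degree_add_degree (u := u) hNv
    (by linarith [hdeg u, hdeg v])
  obtain ⟨M', hM', hlt⟩ := hM.exists_verts_ssubset_of_adj hxy hu hv hvu.symm hux hvy
  exact not_ssubset M' hM' hlt

lemma compl_lineGraph_adj_iff {e₁ e₂ : G.edgeSet} :
    G.lineGraphᶜ.Adj e₁ e₂ ↔ e₁ ≠ e₂ ∧ ∀ v ∈ (e₁ : Sym2 V), v ∉ (e₂ : Sym2 V) := by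
  simp only [compl_adj, lineGraph_adj_iff_exists, not_and, not_exists]
  tauto

lemma lineGraph_degree_add_two_le [Fintype V] [DecidableEq V] [DecidableRel G.Adj]
    [DecidableRel G.lineGraph.Adj] {a b : V} (hab : G.Adj a b) :
    G.lineGraph.degree ⟨s(a, b), hab⟩ + 2 ≤ G.degree a + G.degree b := by
  have hsub : (G.lineGraph.neighborFinset ⟨s(a, b), hab⟩).map (Function.Embedding.subtype _) ⊆
      (G.incidenceFinset a).erase s(a, b) ∪ (G.incidenceFinset b).erase s(a, b) := by
    intro e he
    simp only [Finset.mem_map, mem_neighborFinset, lineGraph_adj_iff_exists] at he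
    obtain ⟨⟨e, he⟩, ⟨hne, w, hw, hwe⟩, rfl⟩ := he
    have hne : e ≠ s(a, b) := fun h => hne (Subtype.ext h.symm)
    rcases Sym2.mem_iff.1 hw with rfl | rfl <;>
      simp [mem_incidenceFinset, incidenceSet, he, hwe, hne]
  have hmem (v : V) (hv : v ∈ s(a, b)) : s(a, b) ∈ G.incidenceFinset v := by
    rw [mem_incidenceFinset]
    exact ⟨hab, hv⟩
  have hcard := (Finset.card_le_card hsub).trans (Finset.card_union_le _ _)
  rw [Finset.card_map, card_neighborFinset_eq_degree,
    Finset.card_erase_of_mem (hmem a (Sym2.mem_mk_left a b)),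
    Finset.card_erase_of_mem (hmem b (Sym2.mem_mk_right a b)),
    card_incidenceFinset_eq_degree, card_incidenceFinset_eq_degree] at hcard
  have := (G.degree_pos_iff_exists_adj a).2 ⟨b, hab⟩
  have := (G.degree_pos_iff_exists_adj b).2 ⟨a, hab.symm⟩
  omega

lemma card_edgeSet_lt_two_mul_degree_compl_lineGraph [Fintype V] [DecidableEq V]
    [DecidableRel G.Adj] [DecidableRel G.lineGraph.Adj]
    (hdeg : ∀ v, 4 * G.degree v ≤ Fintype.card G.edgeSet) (e : G.edgeSet) :
    Fintype.card G.edgeSet < 2 * G.lineGraphᶜ.degree e := by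
  obtain ⟨e, he⟩ := e
  induction e using Sym2.inductionOn with
  | hf a b =>
    have := lineGraph_degree_add_two_le (a := a) (b := b) he
    have := hdeg a
    have := hdeg b
    rw [degree_compl]
    omega

lemma exists_pairs_of_isPerfectMatching_compl_lineGraph [Fintype V] [DecidableEq V]
    [DecidableRel G.Adj] {N : G.lineGraphᶜ.Subgraph} (hN : N.IsPerfectMatching) :
    ∃ P : Finset (Finset (Sym2 V)),
      (∀ M ∈ P, M.card = 2 ∧ ∀ e ∈ M, ∀ e' ∈ M, e ≠ e' → ∀ v ∈ e, v ∉ e') ∧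
      (∀ M ∈ P, M ⊆ G.edgeFinset) ∧
      (∀ M ∈ P, ∀ M' ∈ P, M ≠ M' → Disjoint M M') ∧
      (∀ e ∈ G.edgeFinset, ∃ M ∈ P, e ∈ M) := by
  choose p hp using fun e => (Subgraph.isPerfectMatching_iff.1 hN e).exists
  have hpp (e : G.edgeSet) : p (p e) = e := hN.1.eq_of_adj_left (hp (p e)) (hp e).symm
  have hdisj (e : G.edgeSet) := compl_lineGraph_adj_iff.1 (N.adj_sub (hp e))
  let pair (e : G.edgeSet) : Finset (Sym2 V) := {e.1, (p e).1}
  have pair_partner (e : G.edgeSet) : pair (p e) = pair e := by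
    simp only [pair, hpp, Finset.pair_comm]
  have mem_pair {a : Sym2 V} {e : G.edgeSet} (ha : a ∈ pair e) :
      ∃ c, a = c.1 ∧ pair c = pair e := by
    rcases Finset.mem_insert.1 ha with rfl | ha
    · exact ⟨e, rfl, rfl⟩
    · exact ⟨p e, Finset.mem_singleton.1 ha, pair_partner e⟩
  refine ⟨Finset.univ.image pair, Finset.forall_mem_image.2 fun e _ => ?_,
    Finset.forall_mem_image.2 fun e _ => ?_,
    Finset.forall_mem_image.2 fun e _ => Finset.forall_mem_image.2 fun e' _ hne => ?_,
    fun e he => ?_⟩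
  · refine ⟨Finset.card_pair fun h => (hdisj e).1 (Subtype.ext h), ?_⟩
    simp only [pair, Finset.mem_insert, Finset.mem_singleton]
    rintro _ (rfl | rfl) _ (rfl | rfl) hne
    exacts [absurd rfl hne, (hdisj e).2, fun v hv hv' => (hdisj e).2 v hv' hv, absurd rfl hne]
  · simp [pair, Finset.insert_subset_iff]
  · refine Finset.disjoint_left.2 fun a ha ha' => hne ?_
    obtain ⟨c, rfl, hc⟩ := mem_pair ha
    obtain ⟨c', hcc', hc'⟩ := mem_pair ha'
    rw [← hc, ← hc', Subtype.ext hcc']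
  · exact ⟨pair ⟨e, mem_edgeFinset.1 he⟩, Finset.mem_image_of_mem _ (Finset.mem_univ _),
      Finset.mem_insert_self _ _⟩

end SimpleGraph

theorem stmt_9_general {V : Type*} [Fintype V] [DecidableEq V] (G : SimpleGraph V)
    [DecidableRel G.Adj]
    (heven : Even G.edgeFinset.card)
    (hdeg : ∀ v, 4 * G.degree v ≤ G.edgeFinset.card) :
    ∃ P : Finset (Finset (Sym2 V)),
      (∀ M ∈ P, M.card = 2 ∧ ∀ e ∈ M, ∀ e' ∈ M, e ≠ e' → ∀ v ∈ e, v ∉ e') ∧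
      (∀ M ∈ P, M ⊆ G.edgeFinset) ∧
      (∀ M ∈ P, ∀ M' ∈ P, M ≠ M' → Disjoint M M') ∧
      (∀ e ∈ G.edgeFinset, ∃ M ∈ P, e ∈ M) := by
  classical
  rw [SimpleGraph.edgeFinset_card] at heven hdeg
  obtain ⟨M, hM⟩ := SimpleGraph.exists_isPerfectMatching_of_card_lt_two_mul_degree heven
    (SimpleGraph.card_edgeSet_lt_two_mul_degree_compl_lineGraph hdeg)
  exact SimpleGraph.exists_pairs_of_isPerfectMatching_compl_lineGraph hM

/-- A bipartite graph with an even number of edges and `4Δ ≤ e` decomposes into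
matchings of size exactly 2. -/
theorem stmt_9 {V : Type*} [Fintype V] [DecidableEq V] (G : SimpleGraph V)
    [DecidableRel G.Adj] (A : Set V)
    (hbip : ∀ x y, G.Adj x y → (x ∈ A ↔ y ∉ A))
    (heven : Even G.edgeFinset.card)
    (hdeg : ∀ v, 4 * G.degree v ≤ G.edgeFinset.card) :
    ∃ P : Finset (Finset (Sym2 V)),
      (∀ M ∈ P, M.card = 2 ∧ ∀ e ∈ M, ∀ e' ∈ M, e ≠ e' → ∀ v ∈ e, v ∉ e') ∧
      (∀ M ∈ P, M ⊆ G.edgeFinset) ∧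
      (∀ M ∈ P, ∀ M' ∈ P, M ≠ M' → Disjoint M M') ∧
      (∀ e ∈ G.edgeFinset, ∃ M ∈ P, e ∈ M) :=
  stmt_9_general G heven hdeg
end

section
/- Let items be processed one by one in some order, and at each step let the current item receive a colour from its set of available colours, which has size at least m, chosen so that it currently appears a minimum number of times among that item's available colours. Then at the end every colour class has size at most N/m + 1, where N is the total number of items. -/
/-- Greedy balanced colouring: `N` items are processed in order; item `k` has an
available set `A k` of at least `m` colours and receives a colour of `A k` currently
used least often among `A k`. Then every colour class has size at most `N/m + 1`. -/
theorem stmt_10 (N s m : ℕ) (hm : 0 < m) (A : Fin N → Finset (Fin s))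
    (hA : ∀ k, m ≤ (A k).card) (c : Fin N → Fin s)
    (hmem : ∀ k, c k ∈ A k)
    (hgreedy : ∀ k, ∀ col ∈ A k,
      (Finset.univ.filter fun j : Fin N => j < k ∧ c j = c k).card ≤
      (Finset.univ.filter fun j : Fin N => j < k ∧ c j = col).card) :
    ∀ col : Fin s,
      ((Finset.univ.filter fun k : Fin N => c k = col).card : ℝ) ≤ N / m + 1 := by
  intro col
  set S := Finset.univ.filter fun k : Fin N => c k = col with hSdef
  rcases S.eq_empty_or_nonempty with h | hS
  · rw [h]
    simp only [Finset.card_empty, Nat.cast_zero]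
    positivity
  · set k := S.max' hS with hk
    have hkS : k ∈ S := S.max'_mem hS
    have hck : c k = col := (Finset.mem_filter.mp hkS).2
    have hfe : (Finset.univ.filter fun j : Fin N => j < k ∧ c j = col) = S.erase k := by
      ext j
      simp only [Finset.mem_filter, Finset.mem_erase, Finset.mem_univ, true_and, hSdef]
      constructor
      · rintro ⟨hlt, hc⟩; exact ⟨ne_of_lt hlt, hc⟩
      · rintro ⟨hne, hc⟩
        exact ⟨lt_of_le_of_ne (S.le_max' j (by simp [hSdef, hc])) hne, hc⟩
    have hcard : (Finset.univ.filter fun j : Fin N => j < k ∧ c j = col).card = S.card - 1 := by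
      rw [hfe, Finset.card_erase_of_mem hkS]
    have hbound : ∀ col' ∈ A k,
        S.card - 1 ≤ (Finset.univ.filter fun j : Fin N => j < k ∧ c j = col').card := by
      intro col' hcol'
      have := hgreedy k col' hcol'
      rwa [hck, hcard] at this
    have hsum : (A k).card * (S.card - 1) ≤ N := by
      have h1 : (A k).card • (S.card - 1) ≤
          ∑ col' ∈ A k, (Finset.univ.filter fun j : Fin N => j < k ∧ c j = col').card :=
        Finset.card_nsmul_le_sum _ _ _ hbound
      have h2 : ∑ col' ∈ A k, (Finset.univ.filter fun j : Fin N => j < k ∧ c j = col').card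
          = ((A k).biUnion fun col' => Finset.univ.filter fun j : Fin N => j < k ∧ c j = col').card := by
        rw [Finset.card_biUnion]
        intro a _ b _ hab
        apply Finset.disjoint_left.mpr
        intro j hj hj'
        simp only [Finset.mem_filter] at hj hj'
        exact hab (hj.2.2.symm.trans hj'.2.2)
      have h3 : ((A k).biUnion fun col' => Finset.univ.filter
          fun j : Fin N => j < k ∧ c j = col').card ≤ N := by
        calc _ ≤ Fintype.card (Fin N) := Finset.card_le_univ _
          _ = N := Fintype.card_fin N
      calc (A k).card * (S.card - 1) = (A k).card • (S.card - 1) := (smul_eq_mul _ _).symm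
        _ ≤ _ := h1
        _ = _ := h2
        _ ≤ N := h3
    have hmN : m * (S.card - 1) ≤ N :=
      le_trans (Nat.mul_le_mul_right _ (hA k)) hsum
    have hS1 : 1 ≤ S.card := Finset.card_pos.mpr hS
    have hreal : (m : ℝ) * ((S.card : ℝ) - 1) ≤ N := by
      have : ((m * (S.card - 1) : ℕ) : ℝ) ≤ (N : ℝ) := Nat.cast_le.mpr hmN
      push_cast [Nat.cast_sub hS1] at this
      linarith
    have hmpos : (0 : ℝ) < m := by exact_mod_cast hm
    have : (S.card : ℝ) - 1 ≤ N / m := by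
      rw [le_div_iff₀ hmpos]
      linarith
    linarith
end

section
/- Let G be a graph that is (ε, s, D)-typical with respect to a vertex partition (V_1,...,V_t) with dn ≤ |V_i| ≤ n for all i and D ≥ d·I for an indicator matrix I. Let L be a graph on V(G) with Δ(L) ≤ γn such that L[V_i,V_j] is nonempty only when G[V_i,V_j] is nonempty. Then the symmetric difference G △ L is (ε + sγd^{-s-1}, s, D)-typical. -/
open Finset

/-- `G` is `(ε,s,D)`-typical with respect to the vertex partition `Vp` (with assignment
`τ`): for every set `S` of at most `s` vertices and every class `i`,
`|V_i ∩ ⋂_{v∈S} N(v)| = (1±ε)|V_i|∏_{v∈S} D_{τ(v),i}`. -/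
def IsTypical {V : Type*} (G : SimpleGraph V) {t : ℕ} (Vp : Fin t → Set V)
    (τ : V → Fin t) (ε : ℝ) (s : ℕ) (D : Fin t → Fin t → ℝ) : Prop :=
  ∀ S : Finset V, S.card ≤ s → ∀ i : Fin t,
    |(((Vp i) ∩ ⋂ v ∈ S, G.neighborSet v).ncard : ℝ) -
        ((Vp i).ncard : ℝ) * ∏ v ∈ S, D (τ v) i| ≤
      ε * ((Vp i).ncard : ℝ) * ∏ v ∈ S, D (τ v) i

/-!
Outside the `L`-neighbourhoods of the vertices of `S`, the common neighbourhoods of `S` in `G` and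
in `G △ L` coincide, so their sizes differ by at most `|S| γ n ≤ s γ n`; since every density
involved is at least `d`, this is at most `s γ d^{-s-1}` times the expected size `|V_i| ∏ D`.
If instead some density `D_{τ(v),i}` vanishes, typicality forces `G` to have no edges between
`V_{τ(v)}` and `V_i`, hence neither does `L`, and both sides of the typicality estimate are `0`.
-/

lemma Set.abs_ncard_sub_le_of_subset_union {α : Type*} [Finite α] {A B U : Set α}
    (hA : A ⊆ B ∪ U) (hB : B ⊆ A ∪ U) : |(A.ncard : ℝ) - B.ncard| ≤ U.ncard := by
  have hAB : (A.ncard : ℝ) ≤ B.ncard + U.ncard := by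
    exact_mod_cast (Set.ncard_le_ncard hA).trans (Set.ncard_union_le _ _)
  have hBA : (B.ncard : ℝ) ≤ A.ncard + U.ncard := by
    exact_mod_cast (Set.ncard_le_ncard hB).trans (Set.ncard_union_le _ _)
  exact abs_sub_le_iff.2 ⟨by linarith, by linarith⟩

lemma le_zpow_neg_sub_one_mul {d c P x : ℝ} {s : ℕ} (hd : 0 < d) (hx : 0 ≤ x) (hc : d * x ≤ c)
    (hP : d ^ s ≤ P) : x ≤ d ^ (-(s : ℤ) - 1) * (c * P) := by
  rw [show -(s : ℤ) - 1 = -((s + 1 : ℕ) : ℤ) by push_cast; ring, zpow_neg, zpow_natCast,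
    le_inv_mul_iff₀ (by positivity)]
  calc d ^ (s + 1) * x = d * x * d ^ s := by ring
    _ ≤ c * P := mul_le_mul hc hP (by positivity) ((mul_nonneg hd.le hx).trans hc)

namespace SimpleGraph

variable {V : Type*}

lemma inter_iInter_neighborSet_symmDiff_subset (G L : SimpleGraph V) (W : Set V) (S : Finset V) :
    W ∩ ⋂ v ∈ S, (symmDiff G L).neighborSet v ⊆
      (W ∩ ⋂ v ∈ S, G.neighborSet v) ∪ ⋃ v ∈ S, L.neighborSet v := by
  rintro u ⟨huW, hu⟩
  by_cases hL : ∃ v ∈ S, L.Adj v u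
  · obtain ⟨v, hv, hvu⟩ := hL
    exact Or.inr (Set.mem_biUnion hv hvu)
  · push Not at hL
    refine Or.inl ⟨huW, Set.mem_iInter₂.2 fun v hv => ?_⟩
    have hvu := Set.mem_iInter₂.1 hu v hv
    simp only [mem_neighborSet, symmDiff_def, sup_adj, sdiff_adj, hL v hv] at hvu ⊢
    tauto

lemma abs_ncard_inter_iInter_neighborSet_symmDiff_sub_le [Finite V] (G L : SimpleGraph V)
    (W : Set V) (S : Finset V) :
    |((W ∩ ⋂ v ∈ S, (symmDiff G L).neighborSet v).ncard : ℝ) -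
        (W ∩ ⋂ v ∈ S, G.neighborSet v).ncard| ≤ ∑ v ∈ S, ((L.neighborSet v).ncard : ℝ) := by
  have hsub := G.inter_iInter_neighborSet_symmDiff_subset L W S
  -- `G = (G △ L) △ L`, so the reverse inclusion is the same lemma.
  have hsub' := (symmDiff G L).inter_iInter_neighborSet_symmDiff_subset L W S
  rw [symmDiff_symmDiff_cancel_right] at hsub'
  refine (Set.abs_ncard_sub_le_of_subset_union hsub hsub').trans ?_
  exact_mod_cast set_ncard_biUnion_le S _

end SimpleGraph

section IsTypical

variable {V : Type*} [Finite V] {G L : SimpleGraph V} {t : ℕ} {Vp : Fin t → Set V}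
  {τ : V → Fin t} {ε : ℝ} {s : ℕ} {D : Fin t → Fin t → ℝ}

lemma IsTypical.inter_neighborSet_eq_empty (htyp : IsTypical G Vp τ ε s D) (hs : 1 ≤ s)
    {w : V} {i : Fin t} (hw : D (τ w) i = 0) : Vp i ∩ G.neighborSet w = ∅ := by
  have h := htyp {w} (by simpa using hs) i
  simp only [prod_singleton, set_biInter_singleton, hw, mul_zero, sub_zero, abs_nonpos_iff,
    Nat.cast_eq_zero] at h
  exact (Set.ncard_eq_zero (Set.toFinite _)).1 h

lemma IsTypical.inter_neighborSet_symmDiff_eq_empty (htyp : IsTypical G Vp τ ε s D)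
    (hτ : ∀ v, v ∈ Vp (τ v)) (hpart : ∀ i j, i ≠ j → Disjoint (Vp i) (Vp j))
    (hLG : ∀ i j, (∃ x ∈ Vp i, ∃ y ∈ Vp j, L.Adj x y) → ∃ x ∈ Vp i, ∃ y ∈ Vp j, G.Adj x y)
    (hs : 1 ≤ s) {w : V} {i : Fin t} (hw : D (τ w) i = 0) :
    Vp i ∩ (symmDiff G L).neighborSet w = ∅ := by
  have hG : ∀ x, D (τ x) i = 0 → ∀ y ∈ Vp i, ¬ G.Adj x y := fun x hx y hy hxy =>
    (htyp.inter_neighborSet_eq_empty hs hx).subset ⟨hy, hxy⟩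
  refine Set.eq_empty_of_forall_notMem fun u ⟨hu, hwu⟩ => ?_
  simp only [SimpleGraph.mem_neighborSet, symmDiff_def, SimpleGraph.sup_adj,
    SimpleGraph.sdiff_adj] at hwu
  rcases hwu with ⟨hGwu, -⟩ | ⟨hLwu, -⟩
  · exact hG w hw u hu hGwu
  · obtain ⟨x, hx, y, hy, hxy⟩ := hLG (τ w) i ⟨w, hτ w, u, hu, hLwu⟩
    have hτx : τ x = τ w := by
      by_contra hne
      exact Set.disjoint_left.1 (hpart _ _ hne) (hτ x) hx
    exact hG x (hτx ▸ hw) y hy hxy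

end IsTypical

theorem stmt_15_general {V : Type*} [Fintype V] (G L : SimpleGraph V) (t : ℕ)
    (Vp : Fin t → Set V) (τ : V → Fin t) (hτ : ∀ v, v ∈ Vp (τ v))
    (hpart : ∀ i j, i ≠ j → Disjoint (Vp i) (Vp j))
    (ε γ d : ℝ) (s n : ℕ) (hγ : 0 < γ) (hd : 0 < d) (hd1 : d ≤ 1)
    (D : Fin t → Fin t → ℝ)
    (hDI : ∀ i j, D i j = 0 ∨ d ≤ D i j)
    (hsize : ∀ i, d * n ≤ ((Vp i).ncard : ℝ) ∧ (Vp i).ncard ≤ n)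
    (htyp : IsTypical G Vp τ ε s D)
    (hΔ : ∀ v, ((L.neighborSet v).ncard : ℝ) ≤ γ * n)
    (hLG : ∀ i j, (∃ x ∈ Vp i, ∃ y ∈ Vp j, L.Adj x y) →
      ∃ x ∈ Vp i, ∃ y ∈ Vp j, G.Adj x y) :
    IsTypical (symmDiff G L) Vp τ (ε + s * γ * d ^ (-(s : ℤ) - 1)) s D := by
  intro S hS i
  by_cases hdense : ∀ v ∈ S, d ≤ D (τ v) i
  · have hP : d ^ s ≤ ∏ v ∈ S, D (τ v) i := calc
      d ^ s ≤ d ^ S.card := pow_le_pow_of_le_one hd.le hd1 hS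
      _ = ∏ _v ∈ S, d := (prod_const d).symm
      _ ≤ ∏ v ∈ S, D (τ v) i := prod_le_prod (fun _ _ => hd.le) hdense
    have hL : ∑ v ∈ S, ((L.neighborSet v).ncard : ℝ) ≤ s * γ * n := calc
      _ ≤ ∑ _v ∈ S, γ * n := sum_le_sum fun v _ => hΔ v
      _ = S.card * (γ * n) := by rw [sum_const, nsmul_eq_mul]
      _ ≤ s * γ * n := by rw [mul_assoc]; gcongr
    have hn := le_zpow_neg_sub_one_mul hd (Nat.cast_nonneg n) (hsize i).1 hP
    calc _ ≤ _ := abs_sub_le _ ((Vp i ∩ ⋂ v ∈ S, G.neighborSet v).ncard : ℝ) _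
      _ ≤ s * γ * n + ε * (Vp i).ncard * ∏ v ∈ S, D (τ v) i :=
        add_le_add ((G.abs_ncard_inter_iInter_neighborSet_symmDiff_sub_le L _ S).trans hL)
          (htyp S hS i)
      _ ≤ _ := by linarith [mul_le_mul_of_nonneg_left hn (by positivity : (0 : ℝ) ≤ s * γ)]
  · push Not at hdense
    obtain ⟨w, hw, hwd⟩ := hdense
    have hw0 : D (τ w) i = 0 := (hDI _ _).resolve_right hwd.not_ge
    have hs : 1 ≤ s := (one_le_card.2 ⟨w, hw⟩).trans hS
    have hempty : Vp i ∩ ⋂ v ∈ S, (symmDiff G L).neighborSet v = ∅ :=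
      Set.subset_eq_empty (Set.inter_subset_inter_right _ (Set.biInter_subset_of_mem hw))
        (htyp.inter_neighborSet_symmDiff_eq_empty hτ hpart hLG hs hw0)
    simp [hempty, prod_eq_zero (f := fun v => D (τ v) i) hw hw0]

/-- Typicality is robust under removing/adding a sparse graph `L`: if `G` is
`(ε,s,D)`-typical, `Δ(L) ≤ γn`, and `L` has edges between `V_i` and `V_j` only when `G`
does, then `G △ L` is `(ε + sγd^{-s-1}, s, D)`-typical. -/
theorem stmt_15 {V : Type*} [Fintype V] (G L : SimpleGraph V) (t : ℕ)
    (Vp : Fin t → Set V) (τ : V → Fin t) (hτ : ∀ v, v ∈ Vp (τ v))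
    (hpart : ∀ i j, i ≠ j → Disjoint (Vp i) (Vp j))
    (ε γ d : ℝ) (s n : ℕ) (hε : 0 < ε) (hγ : 0 < γ) (hd : 0 < d) (hd1 : d ≤ 1)
    (D : Fin t → Fin t → ℝ) (hDsymm : ∀ i j, D i j = D j i)
    (hD01 : ∀ i j, 0 ≤ D i j ∧ D i j ≤ 1)
    (hDI : ∀ i j, D i j = 0 ∨ d ≤ D i j)
    (hsize : ∀ i, d * n ≤ ((Vp i).ncard : ℝ) ∧ (Vp i).ncard ≤ n)
    (htyp : IsTypical G Vp τ ε s D)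
    (hΔ : ∀ v, ((L.neighborSet v).ncard : ℝ) ≤ γ * n)
    (hLG : ∀ i j, (∃ x ∈ Vp i, ∃ y ∈ Vp j, L.Adj x y) →
      ∃ x ∈ Vp i, ∃ y ∈ Vp j, G.Adj x y) :
    IsTypical (symmDiff G L) Vp τ (ε + s * γ * d ^ (-(s : ℤ) - 1)) s D :=
  stmt_15_general G L t Vp τ hτ hpart ε γ d s n hγ hd hd1 D hDI hsize htyp hΔ hLG
end
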